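/- arXiv:2406.05960 — 6 statements merged into one kernel-verified Lean document; each statement's English description precedes it below -/
import Mathlib

section
/- Let z_1,…,z_n be monomials in the polynomial ring K[x_1,…,x_m] over a field K such that for i ≠ j, z_i does not divide z_j, gcd(z_i, z_{i2}) divides z_{i1} whenever 1 ≤ i < i1 ≤ i2 ≤ n, and gcd(z_i, z_j) = gcd(z_i, z_j^2) for all 1 ≤ i < j ≤ n. Then for all i < i1 ≤ i2, gcd(z_i, z_{i1} z_{i2}) = gcd(z_i, z_{i1}). -/
/-!
Everything is a statement about exponent vectors, checked one variable at a time. Fix a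
variable and write `p = a i t`, `q = a i1 t`, `r = a i2 t`. If `p ≤ q` both sides equal `p`.
Otherwise `q < p`, and `min p q = min p (2q)` forces `q = 0`; then the divisibility
`gcd(z_i, z_{i2}) ∣ z_{i1}` gives `min p r = 0`, so `r = 0` as well.
-/

open MvPolynomial

namespace MvPolynomial

variable {σ R : Type*} [CommSemiring R] [Fintype σ]

theorem prod_X_pow_eq_monomial_equivFunOnFinite (b : σ → ℕ) :
    ∏ t, (X t : MvPolynomial σ R) ^ b t = monomial (Finsupp.equivFunOnFinite.symm b) 1 := by
  classical
  rw [prod_X_pow]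
  congr
  ext t
  simp

theorem prod_X_pow_dvd_prod_X_pow_iff [Nontrivial R] {b c : σ → ℕ} :
    (∏ t, (X t : MvPolynomial σ R) ^ b t) ∣ ∏ t, X t ^ c t ↔ b ≤ c := by
  simp [prod_X_pow_eq_monomial_equivFunOnFinite, monomial_dvd_monomial, Finsupp.le_def,
    Pi.le_def]

end MvPolynomial

namespace Nat

theorem eq_zero_of_min_eq_min_two_mul {a b : ℕ} (h : min a b = min a (2 * b)) (hb : b < a) :
    b = 0 := by
  omega

theorem min_add_eq_min_left {a b c : ℕ} (hb : min a b = min a (2 * b)) (hc : min a c ≤ b) :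
    min a (b + c) = min a b := by
  rcases le_or_gt a b with hab | hba
  · omega
  · have hb0 := eq_zero_of_min_eq_min_two_mul hb hba
    omega

end Nat

theorem monomial_gcd_of_pSeq_conditions_general {K : Type*} [Field K] {m n : ℕ}
    (a : Fin n → Fin m → ℕ)
    (hcond1 : ∀ i i1 i2 : Fin n, i < i1 → i1 ≤ i2 →
      (∏ t, (X t : MvPolynomial (Fin m) K) ^ min (a i t) (a i2 t)) ∣ ∏ t, (X t) ^ a i1 t)
    (hcond2 : ∀ i j : Fin n, i < j →
      (fun t => min (a i t) (a j t)) = (fun t => min (a i t) (2 * a j t))) :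
    ∀ i i1 i2 : Fin n, i < i1 → i1 ≤ i2 →
      (fun t => min (a i t) (a i1 t + a i2 t)) = (fun t => min (a i t) (a i1 t)) := by
  intro i i1 i2 hi hi1
  have hdvd := prod_X_pow_dvd_prod_X_pow_iff.mp (hcond1 i i1 i2 hi hi1)
  funext t
  exact Nat.min_add_eq_min_left (congrFun (hcond2 i i1 hi) t) (hdvd t)

/-- For monomials `z i = x^(a i)` in `K[x_1,…,x_m]` (gcd of monomials
being given by the componentwise minimum of exponent vectors), if `z i ∤ z j` for
`i ≠ j`, `gcd(z_i, z_{i2}) ∣ z_{i1}` whenever `i < i1 ≤ i2`, and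
`gcd(z_i, z_j) = gcd(z_i, z_j^2)` for `i < j`, then
`gcd(z_i, z_{i1} z_{i2}) = gcd(z_i, z_{i1})` for all `i < i1 ≤ i2`. -/
theorem monomial_gcd_of_pSeq_conditions {K : Type*} [Field K] {m n : ℕ}
    (a : Fin n → Fin m → ℕ)
    (hnd : ∀ i j : Fin n, i ≠ j →
      ¬ ((∏ t, (X t : MvPolynomial (Fin m) K) ^ a i t) ∣ ∏ t, (X t) ^ a j t))
    (hcond1 : ∀ i i1 i2 : Fin n, i < i1 → i1 ≤ i2 →
      (∏ t, (X t : MvPolynomial (Fin m) K) ^ min (a i t) (a i2 t)) ∣ ∏ t, (X t) ^ a i1 t)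
    (hcond2 : ∀ i j : Fin n, i < j →
      (fun t => min (a i t) (a j t)) = (fun t => min (a i t) (2 * a j t))) :
    ∀ i i1 i2 : Fin n, i < i1 → i1 ≤ i2 →
      (fun t => min (a i t) (a i1 t + a i2 t)) = (fun t => min (a i t) (a i1 t)) :=
  monomial_gcd_of_pSeq_conditions_general a hcond1 hcond2
end

section
/- Let z_1,…,z_n be monomials in K[x_1,…,x_m] over a field K such that for i ≠ j, z_i ∤ z_j, gcd(z_i, z_{i2}) | z_{i1} for all 1 ≤ i < i1 ≤ i2 ≤ n, and gcd(z_i, z_j) = gcd(z_i, z_j^2) for all 1 ≤ i < j ≤ n. Then z_1,…,z_n form a p-sequence: (z_1,…,z_i) : (z_{i1} z_{i2}) = (z_1,…,z_i) : z_{i1} for all 0 ≤ i ≤ n−1 and i < i1 ≤ i2 ≤ n, and z_1,…,z_n minimally generate (z_1,…,z_n). -/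
/-!
For a monomial ideal `I = (x^s : s ∈ S)`, a polynomial `f` satisfies `f x^c ∈ I` iff every
exponent `w` of `f` has `s ≤ w + c` for some `s ∈ S`. Hence `I : x^(u+v) = I : x^u` as soon as
every `s ∈ S` is bounded by `u` in each coordinate where `v` is nonzero. For
`I = (z_1, …, z_i)`, `u = a_{i1}`, `v = a_{i2}` this is exactly what the two gcd conditions say.
Minimality is the same membership criterion applied to a single monomial.
-/

open MvPolynomial

namespace MvPolynomial

variable {σ R : Type*} [CommSemiring R]

lemma prod_univ_X_pow_eq_monomial [Fintype σ] (b : σ → ℕ) :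
    ∏ t, (X t : MvPolynomial σ R) ^ b t = monomial (Finsupp.equivFunOnFinite.symm b) 1 := by
  classical
  rw [← prod_X_pow_eq_monomial]
  refine (Finset.prod_subset (Finset.subset_univ _) fun t _ ht => ?_).symm
  rw [← Finsupp.coe_equivFunOnFinite_symm b, Finsupp.notMem_support_iff.mp ht, pow_zero]

lemma support_mul_monomial_one (p : MvPolynomial σ R) (u : σ →₀ ℕ) :
    (p * monomial u 1).support = p.support.map (addRightEmbedding u) :=
  AddMonoidAlgebra.support_coeff_mul_single p _ (by simp) _

lemma mul_monomial_mem_span_monomial_image_iff {p : MvPolynomial σ R} {u : σ →₀ ℕ}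
    {S : Set (σ →₀ ℕ)} :
    p * monomial u 1 ∈ Ideal.span ((fun s => monomial s (1 : R)) '' S) ↔
      ∀ w ∈ p.support, ∃ s ∈ S, s ≤ w + u := by
  simp [mem_ideal_span_monomial_image, support_mul_monomial_one]

lemma monomial_mem_span_monomial_image_iff [Nontrivial R] {u : σ →₀ ℕ} {S : Set (σ →₀ ℕ)} :
    monomial u (1 : R) ∈ Ideal.span ((fun s => monomial s (1 : R)) '' S) ↔ ∃ s ∈ S, s ≤ u := by
  classical
  simp [mem_ideal_span_monomial_image, support_monomial]

lemma colon_span_monomial_add_eq {S : Set (σ →₀ ℕ)} {u v : σ →₀ ℕ}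
    (h : ∀ s ∈ S, ∀ t, v t = 0 ∨ s t ≤ u t) :
    (Ideal.span ((fun s => monomial s (1 : R)) '' S)).colon
        (Ideal.span {monomial (u + v) (1 : R)}) =
      (Ideal.span ((fun s => monomial s (1 : R)) '' S)).colon (Ideal.span {monomial u (1 : R)}) := by
  ext p
  simp only [Ideal.mem_colon_span_singleton, mul_monomial_mem_span_monomial_image_iff]
  refine forall₂_congr fun w _ => ⟨fun ⟨s, hs, hle⟩ => ⟨s, hs, fun t => ?_⟩,
    fun ⟨s, hs, hle⟩ => ⟨s, hs, hle.trans (by rw [← add_assoc]; exact le_self_add)⟩⟩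
  have hst : s t ≤ w t + u t + v t := by simpa [add_assoc] using hle t
  have hvt := h s hs t
  simp only [Finsupp.coe_add, Pi.add_apply]
  omega

end MvPolynomial

/-- Monomials `z i = x^(a i)` in `K[x_1,…,x_m]` satisfying the
non-divisibility and gcd conditions of Proposition 2.7 form a `p`-sequence:
the colon condition `(z_1,…,z_i) : (z_{i1} z_{i2}) = (z_1,…,z_i) : z_{i1}` holds for all
`0 ≤ i ≤ n-1` and `i < i1 ≤ i2 ≤ n` (0-based below), and they minimally generate their
ideal. -/
theorem monomial_pSequence {K : Type*} [Field K] {m n : ℕ}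
    (a : Fin n → Fin m → ℕ)
    (z : Fin n → MvPolynomial (Fin m) K)
    (hz : ∀ i, z i = ∏ t, (X t : MvPolynomial (Fin m) K) ^ a i t)
    (hnd : ∀ i j : Fin n, i ≠ j → ¬ (z i ∣ z j))
    (hcond1 : ∀ i i1 i2 : Fin n, i < i1 → i1 ≤ i2 →
      (∏ t, (X t : MvPolynomial (Fin m) K) ^ min (a i t) (a i2 t)) ∣ z i1)
    (hcond2 : ∀ i j : Fin n, i < j →
      (fun t => min (a i t) (a j t)) = (fun t => min (a i t) (2 * a j t))) :
    (∀ i : ℕ, i < n → ∀ i1 i2 : Fin n, i ≤ i1.val → i1 ≤ i2 →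
      (Ideal.span (z '' {j | j.val < i})).colon (Ideal.span {z i1 * z i2}) =
      (Ideal.span (z '' {j | j.val < i})).colon (Ideal.span {z i1})) ∧
    (∀ k : Fin n, z k ∉ Ideal.span (z '' {j | j ≠ k})) := by
  set D : Fin n → Fin m →₀ ℕ := fun i => Finsupp.equivFunOnFinite.symm (a i)
  have hzD : ∀ i, z i = monomial (D i) 1 := fun i => (hz i).trans (prod_univ_X_pow_eq_monomial _)
  have himg : ∀ S, z '' S = (fun s => monomial s (1 : K)) '' (D '' S) := fun S => by
    rw [Set.image_image]; exact Set.image_congr fun i _ => hzD i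
  -- `hcond2` says `a i2 t = 0 ∨ a j t ≤ a i2 t`, and then `hcond1` bounds `a j t` by `a i1 t`.
  have hexp : ∀ j i1 i2 : Fin n, j < i1 → i1 ≤ i2 → ∀ t, D i2 t = 0 ∨ D j t ≤ D i1 t := by
    intro j i1 i2 hj hi t
    have hmin := hcond1 j i1 i2 hj hi
    rw [prod_univ_X_pow_eq_monomial, hzD, monomial_dvd_monomial] at hmin
    have h1 := hmin.1.resolve_left one_ne_zero t
    have h2 := congrFun (hcond2 j i2 (hj.trans_le hi)) t
    simp only [D, Finsupp.coe_equivFunOnFinite_symm] at h1 ⊢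
    omega
  refine ⟨fun i _ i1 i2 hi1 hi2 => ?_, fun k hk => ?_⟩
  · rw [himg, hzD, hzD, monomial_mul, one_mul]
    refine colon_span_monomial_add_eq ?_
    rintro _ ⟨j, hj, rfl⟩
    exact hexp j i1 i2 (Fin.lt_def.2 (lt_of_lt_of_le hj hi1)) hi2
  · rw [himg, hzD, monomial_mem_span_monomial_image_iff] at hk
    obtain ⟨_, ⟨j, hjk, rfl⟩, hle⟩ := hk
    exact hnd j k hjk (by rw [hzD, hzD, monomial_dvd_monomial]; exact ⟨Or.inr hle, dvd_rfl⟩)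
end

section
/- The sequence of monomials x_1x_3x_4x_5, x_1^2x_2x_6, x_1^2x_2^2x_3x_5 in Q[x_1,…,x_6] is a d-sequence in the given order, but no permutation of it is a p-sequence. -/
/-!
Write `m₁, m₂, m₃` for the three monomials. The `d`-sequence identities are colon computations:
a gcd argument gives `(m₁) : m₂ = (m₁) : m₂² = (x₃x₄x₅)` and `(m₁) : m₃ = (m₁) : m₂m₃ = (x₄)`, and
`(m₁, m₂) : m₃ = (m₁, m₂) : m₃² = (x₄, x₆)` because the prime ideal `(x₄, x₆)` contains `(m₁, m₂)`,
misses `m₃`, and is carried into `(m₁, m₂)` by multiplication with `m₃`.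

Every ordering violates one `p`-sequence identity. If `m₁` comes first, then
`(m₁) : m₂m₃ ≠ (m₁) : m₂` or `(m₁, m₃) : m₂² ≠ (m₁, m₃) : m₂`, depending on the order of the other
two; otherwise `(m) : m₁² ≠ (m) : m₁` for the first element `m`. Each inequality is witnessed by a
monomial `w` with `w ab ∈ I` but `w a ∉ I`, and the non-membership by an evaluation that kills `I`;
where only the power of one variable separates `w a` from `I`, that variable is sent to the
nilpotent `ε` of the dual numbers.
-/

open MvPolynomial

/-- A sequence `z 0, …, z (n-1)` is a `d`-sequence (Huneke): it minimally generates the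
ideal it generates and `(z_1,…,z_i) : z_{i+1} z_j = (z_1,…,z_i) : z_j` for all
`0 ≤ i ≤ n-1` and `j ≥ i+1` (0-based below). -/
def IsDSeq {A : Type*} [CommRing A] {n : ℕ} (z : Fin n → A) : Prop :=
  (∀ k : Fin n, z k ∉ Ideal.span (z '' {j | j ≠ k})) ∧
  (∀ i : Fin n, ∀ j : Fin n, i ≤ j →
    (Ideal.span (z '' {k | k < i})).colon (Ideal.span {z i * z j}) =
    (Ideal.span (z '' {k | k < i})).colon (Ideal.span {z j}))

/-- A sequence `z 0, …, z (n-1)` is a `p`-sequence: it minimally generates the ideal it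
generates and `(z_1,…,z_i) : z_{i1} z_{i2} = (z_1,…,z_i) : z_{i1}` for all
`0 ≤ i ≤ n-1` and `i < i1 ≤ i2 ≤ n` (0-based below). -/
def IsPSeq {A : Type*} [CommRing A] {n : ℕ} (z : Fin n → A) : Prop :=
  (∀ k : Fin n, z k ∉ Ideal.span (z '' {j | j ≠ k})) ∧
  (∀ i : ℕ, i < n → ∀ i1 i2 : Fin n, i ≤ i1.val → i1 ≤ i2 →
    (Ideal.span (z '' {j | j.val < i})).colon (Ideal.span {z i1 * z i2}) =
    (Ideal.span (z '' {j | j.val < i})).colon (Ideal.span {z i1}))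

open Ideal DualNumber

namespace Ideal

variable {R : Type*} [CommRing R]

theorem notMem_span_of_map_eq_zero {S F : Type*} [Semiring S] [FunLike F R S]
    [RingHomClass F R S] (f : F) {T : Set R} (hT : ∀ t ∈ T, f t = 0) {x : R} (hx : f x ≠ 0) :
    x ∉ span T := fun h =>
  hx <| (span_le (I := RingHom.ker f)).2 hT h

theorem colon_span_singleton_le_colon_span_singleton_mul (I : Ideal R) (a b : R) :
    I.colon (span {b}) ≤ I.colon (span {a * b}) := fun r hr => by
  rw [mem_colon_span_singleton] at hr ⊢
  simpa only [mul_left_comm] using I.mul_mem_left a hr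

theorem colon_span_singleton_mul_ne {I : Ideal R} {a b w : R} (hw : w * (a * b) ∈ I)
    (hw' : w * a ∉ I) : I.colon (span {a * b}) ≠ I.colon (span {a}) := fun h => by
  rw [← mem_colon_span_singleton, h, mem_colon_span_singleton] at hw
  exact hw' hw

theorem colon_span_singleton_mul_self_eq {I P : Ideal R} (hP : P.IsPrime) {b : R} (hIP : I ≤ P)
    (hb : b ∉ P) (hPb : P ≤ I.colon (span {b})) :
    I.colon (span {b * b}) = I.colon (span {b}) := by
  refine le_antisymm (fun r hr => hPb ?_) (colon_span_singleton_le_colon_span_singleton_mul I b b)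
  exact (hP.mem_or_mem (hIP (mem_colon_span_singleton.1 hr))).resolve_right (hP.mul_notMem hb hb)

variable [IsDomain R]

theorem bot_colon_span_singleton_mul {a : R} (ha : a ≠ 0) (b : R) :
    (⊥ : Ideal R).colon (span {a * b}) = (⊥ : Ideal R).colon (span {b}) := by
  ext r
  simp [mul_left_comm r a b, ha]

theorem colon_span_singleton_eq_of_isRelPrime [DecompositionMonoid R] {x y g a b : R}
    (hx : x = g * a) (hy : y = g * b) (hg : g ≠ 0) (h : IsRelPrime a b) :
    (span {x}).colon (span {y}) = span {a} := by
  ext r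
  rw [mem_colon_span_singleton, mem_span_singleton, mem_span_singleton, hx, hy, mul_left_comm,
    mul_dvd_mul_iff_left hg]
  exact ⟨h.dvd_of_dvd_mul_right, fun hr => dvd_mul_of_dvd_left hr b⟩

end Ideal

namespace MvPolynomial

variable {σ R : Type*} [CommRing R]

theorem isRelPrime_X_X [IsDomain R] {i j : σ} (h : i ≠ j) :
    IsRelPrime (X i : MvPolynomial σ R) (X j) := by
  rwa [X_prime.irreducible.isRelPrime_iff_not_dvd, X_dvd_X]

theorem sub_aeval_ite_mem_span_X_image (s : Set σ) [DecidablePred (· ∈ s)]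
    (p : MvPolynomial σ R) :
    p - aeval (fun i => if i ∈ s then 0 else X i) p ∈ span (X '' s) := by
  induction p using MvPolynomial.induction_on with
  | C a => simp
  | add p q hp hq => simpa only [map_add, add_sub_add_comm] using add_mem hp hq
  | mul_X p i hp =>
    by_cases hi : i ∈ s
    · simpa [hi] using mul_mem_left _ p (subset_span (Set.mem_image_of_mem X hi))
    · simpa [hi, sub_mul] using mul_mem_right (X i) _ hp

theorem ker_aeval_ite (s : Set σ) [DecidablePred (· ∈ s)] :
    RingHom.ker (aeval (R := R) fun i => if i ∈ s then (0 : MvPolynomial σ R) else X i) =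
      span (X '' s) := by
  refine le_antisymm (fun p hp => ?_) (span_le.2 ?_)
  · simpa only [(RingHom.mem_ker).1 hp, sub_zero] using sub_aeval_ite_mem_span_X_image s p
  · rintro _ ⟨i, hi, rfl⟩
    simp [hi]

theorem isPrime_span_X_image [IsDomain R] (s : Set σ) :
    (span (X '' s : Set (MvPolynomial σ R))).IsPrime := by
  classical
  rw [← ker_aeval_ite]
  exact RingHom.ker_isPrime _

end MvPolynomial

section Sequences

variable {A : Type*} [CommRing A]

theorem isDSeq_three [IsDomain A] {a b c : A}
    (ha : a ∉ span {b, c}) (hb : b ∉ span {a, c}) (hc : c ∉ span {a, b})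
    (hbb : (span {a}).colon (span {b * b}) = (span {a}).colon (span {b}))
    (hbc : (span {a}).colon (span {b * c}) = (span {a}).colon (span {c}))
    (hcc : (span {a, b}).colon (span {c * c}) = (span {a, b}).colon (span {c})) :
    IsDSeq ![a, b, c] := by
  have ha0 : a ≠ 0 := by rintro rfl; exact ha (zero_mem _)
  refine ⟨fun k => ?_, fun i j hij => ?_⟩
  · fin_cases k <;> simp only [Fin.zero_eta, Fin.mk_one, Fin.reduceFinMk, Fin.isValue,
      Matrix.cons_val]
    · rwa [show ![a, b, c] '' {j | j ≠ 0} = {b, c} by ext; simp [Fin.exists_fin_succ, eq_comm]]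
    · rwa [show ![a, b, c] '' {j | j ≠ 1} = {a, c} by ext; simp [Fin.exists_fin_succ, eq_comm]]
    · rwa [show ![a, b, c] '' {j | j ≠ 2} = {a, b} by ext; simp [Fin.exists_fin_succ, eq_comm]]
  · have h0 : ![a, b, c] '' {k | k < 0} = ∅ := by ext; simp
    have h1 : ![a, b, c] '' {k | k < 1} = {a} := by ext; simp [eq_comm]
    have h2 : ![a, b, c] '' {k | k < 2} = {a, b} := by ext; simp [Fin.exists_fin_succ, eq_comm]
    fin_cases i <;> fin_cases j <;> simp only [Fin.zero_eta, Fin.mk_one, Fin.reduceFinMk,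
      Fin.isValue, Fin.reduceLE, Matrix.cons_val, h0, h1, h2, span_empty] at hij ⊢
    · exact bot_colon_span_singleton_mul ha0 _
    · exact bot_colon_span_singleton_mul ha0 _
    · exact bot_colon_span_singleton_mul ha0 _
    · exact hbb
    · exact hbc
    · exact hcc

theorem IsPSeq.colon_span_first {n : ℕ} {w : Fin (n + 1) → A} (h : IsPSeq w) {i j : Fin (n + 1)}
    (hi : 1 ≤ i.val) (hij : i ≤ j) :
    (span {w 0}).colon (span {w i * w j}) = (span {w 0}).colon (span {w i}) := by
  have := h.2 1 (by omega) i j hi hij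
  rwa [show w '' {j | j.val < 1} = {w 0} by ext; simp] at this

theorem IsPSeq.colon_span_first_two {n : ℕ} {w : Fin (n + 2) → A} (h : IsPSeq w)
    {i j : Fin (n + 2)} (hi : 2 ≤ i.val) (hij : i ≤ j) :
    (span {w 0, w 1}).colon (span {w i * w j}) = (span {w 0, w 1}).colon (span {w i}) := by
  have := h.2 2 (by omega) i j hi hij
  rwa [show w '' {j | j.val < 2} = {w 0, w 1} by ext; simp [Fin.exists_fin_succ, eq_comm]] at this

end Sequences

theorem DualNumber.eps_ne_zero {R : Type*} [Semiring R] [Nontrivial R] : (ε : R[ε]) ≠ 0 :=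
  fun h => one_ne_zero (congrArg TrivSqZeroExt.snd h)

section Example

variable {K : Type*} [Field K]

-- `X i` is the variable `x_{i+1}` of the statement.
local notation "m₁" => (X 0 * X 2 * X 3 * X 4 : MvPolynomial (Fin 6) _)
local notation "m₂" => (X 0 ^ 2 * X 1 * X 5 : MvPolynomial (Fin 6) _)
local notation "m₃" => (X 0 ^ 2 * X 1 ^ 2 * X 2 * X 4 : MvPolynomial (Fin 6) _)

theorem isDSeq_example : IsDSeq (![m₁, m₂, m₃] : Fin 3 → MvPolynomial (Fin 6) K) := by
  refine isDSeq_three ?_ ?_ ?_ ?_ ?_ ?_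
  · exact notMem_span_of_map_eq_zero (aeval fun j : Fin 6 => if j = 1 then (0 : K) else 1)
      (by simp) (by simp)
  · exact notMem_span_of_map_eq_zero (aeval fun j : Fin 6 => if j = 2 then (0 : K) else 1)
      (by simp) (by simp)
  · exact notMem_span_of_map_eq_zero
      (aeval fun j : Fin 6 => if j = 3 ∨ j = 5 then (0 : K) else 1) (by simp) (by simp)
  · refine (colon_span_singleton_eq_of_isRelPrime (a := X 2 * X 3 * X 4)
      (b := X 0 ^ 3 * X 1 ^ 2 * X 5 ^ 2) (by ring) (by ring) (X_ne_zero 0) ?_).trans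
      (colon_span_singleton_eq_of_isRelPrime (a := X 2 * X 3 * X 4) (b := X 0 * X 1 * X 5)
        (by ring) (by ring) (X_ne_zero 0) ?_).symm <;>
    simp [IsRelPrime.mul_left_iff, IsRelPrime.mul_right_iff, IsRelPrime.pow_right_iff,
      isRelPrime_X_X]
  · refine (colon_span_singleton_eq_of_isRelPrime (g := X 0 * X 2 * X 4) (a := X 3)
      (b := X 0 ^ 3 * X 1 ^ 3 * X 5) (by ring) (by ring) (by simp) ?_).trans
      (colon_span_singleton_eq_of_isRelPrime (g := X 0 * X 2 * X 4) (a := X 3)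
        (b := X 0 * X 1 ^ 2) (by ring) (by ring) (by simp) ?_).symm <;>
    simp [IsRelPrime.mul_right_iff, IsRelPrime.pow_right_iff, isRelPrime_X_X]
  · refine colon_span_singleton_mul_self_eq (P := span {X 3, X 5})
      (by rw [← Set.image_pair]; exact isPrime_span_X_image _) ?_ ?_ ?_
    · rw [span_le, Set.insert_subset_iff, Set.singleton_subset_iff]
      exact ⟨mem_span_pair.2 ⟨X 0 * X 2 * X 4, 0, by ring⟩,
        mem_span_pair.2 ⟨0, X 0 ^ 2 * X 1, by ring⟩⟩
    · exact notMem_span_of_map_eq_zero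
        (aeval fun j : Fin 6 => if j = 3 ∨ j = 5 then (0 : K) else 1) (by simp) (by simp)
    · rw [span_le, Set.insert_subset_iff, Set.singleton_subset_iff]
      simp only [SetLike.mem_coe, mem_colon_span_singleton]
      exact ⟨mem_span_pair.2 ⟨X 0 * X 1 ^ 2, 0, by ring⟩,
        mem_span_pair.2 ⟨0, X 1 * X 2 * X 4, by ring⟩⟩

variable {w : Fin 3 → MvPolynomial (Fin 6) K}

theorem not_isPSeq_of_apply_eq_m₁_m₂_m₃ (h0 : w 0 = m₁) (h1 : w 1 = m₂) (h2 : w 2 = m₃) :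
    ¬ IsPSeq w := fun h => by
  have := h.colon_span_first (i := 1) (j := 2) le_rfl (by decide)
  rw [h0, h1, h2] at this
  exact colon_span_singleton_mul_ne (w := X 3)
    (mem_span_singleton.2 ⟨X 0 ^ 3 * X 1 ^ 3 * X 5, by ring⟩)
    (notMem_span_of_map_eq_zero (aeval (R := K) fun j : Fin 6 => if j = 2 then (0 : K) else 1)
      (by simp) (by simp)) this

theorem not_isPSeq_of_apply_eq_m₁_m₃_m₂ (h0 : w 0 = m₁) (h1 : w 1 = m₃) (h2 : w 2 = m₂) :
    ¬ IsPSeq w := fun h => by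
  have := h.colon_span_first_two (i := 2) (j := 2) le_rfl le_rfl
  rw [h0, h1, h2] at this
  exact colon_span_singleton_mul_ne (w := X 2 * X 4)
    (mem_span_pair.2 ⟨0, X 0 ^ 2 * X 5 ^ 2, by ring⟩)
    (notMem_span_of_map_eq_zero
      (aeval (R := K) fun j : Fin 6 => if j = 1 then (ε : K[ε]) else if j = 3 then 0 else 1)
      (by simp [sq, eps_mul_eps]) (by simp [eps_ne_zero])) this

theorem not_isPSeq_of_apply_eq_m₁ {t : Fin 3} (ht : 1 ≤ t.val) (hwt : w t = m₁)
    (h0 : w 0 = m₂ ∨ w 0 = m₃) : ¬ IsPSeq w := fun h => by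
  have := h.colon_span_first ht le_rfl
  rw [hwt] at this
  let f := aeval (R := K) fun j : Fin 6 => if j = 0 then (ε : K[ε]) else 1
  rcases h0 with h0 | h0 <;> rw [h0] at this
  · exact colon_span_singleton_mul_ne (w := X 1 * X 5)
      (mem_span_singleton.2 ⟨X 2 ^ 2 * X 3 ^ 2 * X 4 ^ 2, by ring⟩)
      (notMem_span_of_map_eq_zero f (by simp [f, sq, eps_mul_eps]) (by simp [f, eps_ne_zero])) this
  · exact colon_span_singleton_mul_ne (w := X 1 ^ 2)
      (mem_span_singleton.2 ⟨X 2 * X 3 ^ 2 * X 4, by ring⟩)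
      (notMem_span_of_map_eq_zero f (by simp [f, sq, eps_mul_eps]) (by simp [f, eps_ne_zero])) this

theorem not_isPSeq_comp_perm (σ : Equiv.Perm (Fin 3)) :
    ¬ IsPSeq ((![m₁, m₂, m₃] : Fin 3 → MvPolynomial (Fin 6) K) ∘ σ) := by
  obtain ⟨t, ht⟩ := σ.surjective 0
  have hσ : ∀ τ : Equiv.Perm (Fin 3), τ 0 = 0 → (τ 1 = 1 ∧ τ 2 = 2) ∨ (τ 1 = 2 ∧ τ 2 = 1) := by
    decide
  rcases eq_or_ne t 0 with rfl | ht0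
  · rcases hσ σ ht with ⟨h1, h2⟩ | ⟨h1, h2⟩
    · exact not_isPSeq_of_apply_eq_m₁_m₂_m₃ (by simp [ht]) (by simp [h1]) (by simp [h2])
    · exact not_isPSeq_of_apply_eq_m₁_m₃_m₂ (by simp [ht]) (by simp [h1]) (by simp [h2])
  · refine not_isPSeq_of_apply_eq_m₁ (t := t) (Fin.pos_iff_ne_zero.2 ht0) (by simp [ht]) ?_
    have hσ0 : σ 0 ≠ 0 := fun h0 => ht0 (σ.injective (ht.trans h0.symm))
    simp only [Function.comp_apply]
    generalize σ 0 = k at hσ0 ⊢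
    fin_cases k <;> simp at hσ0 ⊢

end Example

/-- The sequence `x₁x₃x₄x₅, x₁²x₂x₆, x₁²x₂²x₃x₅` in `ℚ[x₁,…,x₆]` is a
`d`-sequence in the given order, but no permutation of it is a `p`-sequence. -/
theorem dSeq_not_pSeq_example :
    IsDSeq (![X 0 * X 2 * X 3 * X 4,
              X 0 ^ 2 * X 1 * X 5,
              X 0 ^ 2 * X 1 ^ 2 * X 2 * X 4] : Fin 3 → MvPolynomial (Fin 6) ℚ) ∧
    ∀ σ : Equiv.Perm (Fin 3),
      ¬ IsPSeq ((![X 0 * X 2 * X 3 * X 4,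
              X 0 ^ 2 * X 1 * X 5,
              X 0 ^ 2 * X 1 ^ 2 * X 2 * X 4] : Fin 3 → MvPolynomial (Fin 6) ℚ) ∘ σ) :=
  ⟨isDSeq_example, not_isPSeq_comp_perm⟩
end

section
/- Let G be a tree on vertex set [n+1] with n edges. Then the edge binomials of G can be ordered as d_1,…,d_n so that they form a p-sequence in S = K[x_1,…,x_{n+1}, y_1,…,y_{n+1}]: they minimally generate J_G and, with d_0 = 0, (d_0,…,d_i) : (d_{i1} d_{i2}) = (d_0,…,d_i) : d_{i1} for all 0 ≤ i ≤ n−1 and i < i1 ≤ i2 ≤ n. -/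
/-!
The binomial edge ideal `J_G` is the intersection of the kernels of the monomial maps `φ_W`, for `W`
a set of vertices with at least two neighbours: `φ_W` kills `x_v, y_v` for `v ∈ W` and sends them
to `s_C u_v, t_C u_v` otherwise, `C` the component of `v` in `G - W`. For if all `φ_W` kill `h`, take a
monomial `m` of `h` and `W` the vertices with two neighbours that do not occur in `m`: the
coefficients of `h` on the `φ_W`-fibre of `m` sum to zero, and any two monomials of that fibre are
joined by moves `x_v y_w ↦ x_w y_v` along paths, each of which is a multiple of an edge binomial
modulo `J_G`. Hence `J_G : f g = J_G : f` as soon as `φ_W g = 0` forces `φ_W f = 0`.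

List the edges of the tree as (parent, child) in breadth-first order, and let `G_i` be the forest of
the first `i` edges. For later edges `f` before `g`, the child of `g` is isolated in `G_i`, so
`φ_W g = 0` puts the parent `p` of `g` into `W`. Then `p` has two neighbours in `G_i`, so it is
already the parent of an edge of `G_i`; as edges with a common parent are consecutive, `p` is also
the parent of `f`, and `φ_W f = 0`.
-/

open MvPolynomial

open Finsupp (single)
open Sum (inl inr)

noncomputable section

variable {R : Type*} [CommRing R] {α : Type*}

variable (R) in
def edgeBinomial (a b : α) : MvPolynomial (α ⊕ α) R :=
  X (inl a) * X (inr b) - X (inl b) * X (inr a)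

lemma edgeBinomial_self (a : α) : edgeBinomial R a a = 0 := sub_self _

lemma edgeBinomial_swap (a b : α) : edgeBinomial R b a = -edgeBinomial R a b := by
  simp only [edgeBinomial]
  ring

lemma X_mul_edgeBinomial {ι : α → α ⊕ α} (hι : ι = inl ∨ ι = inr) (u v w : α) :
    X (ι u) * edgeBinomial R v w =
      X (ι v) * edgeBinomial R u w + X (ι w) * edgeBinomial R v u := by
  rcases hι with rfl | rfl <;> (simp only [edgeBinomial]; ring)

lemma edgeBinomial_notMem_span_image [Nontrivial R] {ι : Type*} {e : ι → α × α}
    (he : ∀ j, (e j).1 ≠ (e j).2) (hinj : Function.Injective fun j => s((e j).1, (e j).2))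
    (k : ι) :
    edgeBinomial R (e k).1 (e k).2 ∉
      Ideal.span ((fun j => edgeBinomial R (e j).1 (e j).2) '' {j | j ≠ k}) := by
  classical
  let g : α ⊕ α → R := fun z => if z = inl (e k).1 ∨ z = inr (e k).2 then 1 else 0
  have hg : ∀ c d, eval g (edgeBinomial R c d) ≠ 0 → s(c, d) = s((e k).1, (e k).2) := by
    intro c d h
    simp only [g, edgeBinomial, map_sub, map_mul, eval_X, inl.injEq, inr.injEq, reduceCtorEq,
      or_false, false_or] at h
    split_ifs at h <;> simp_all [Sym2.eq_swap]
  intro hmem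
  have hker : Ideal.span ((fun j => edgeBinomial R (e j).1 (e j).2) '' {j | j ≠ k}) ≤
      RingHom.ker (eval g) := by
    rw [Ideal.span_le]
    rintro _ ⟨j, hj, rfl⟩
    by_contra hne
    exact hj (hinj (hg _ _ hne))
  have := hker hmem
  simp [g, edgeBinomial, he k, (he k).symm] at this

namespace MvPolynomial

variable {σ : Type*}

lemma sum_monomial_mem_of_sum_eq_zero {I : Ideal (MvPolynomial σ R)} {M : Finset (σ →₀ ℕ)}
    {c : (σ →₀ ℕ) → R} {m₀ : σ →₀ ℕ} (hc : ∑ m ∈ M, c m = 0)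
    (hM : ∀ m ∈ M, monomial m 1 - monomial m₀ 1 ∈ I) : ∑ m ∈ M, monomial m (c m) ∈ I := by
  have : ∑ m ∈ M, monomial m (c m) = ∑ m ∈ M, C (c m) * (monomial m 1 - monomial m₀ 1) := by
    simp only [mul_sub, C_mul_monomial, mul_one, Finset.sum_sub_distrib, ← map_sum, hc, map_zero,
      sub_zero]
  rw [this]
  exact I.sum_mem fun m hm => I.mul_mem_left _ (hM m hm)

lemma support_sub_sum_monomial_coeff [DecidableEq σ] (p : MvPolynomial σ R)
    (M : Finset (σ →₀ ℕ)) : (p - ∑ m ∈ M, monomial m (coeff m p)).support = p.support \ M := by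
  ext m
  by_cases hm : m ∈ M <;> simp [coeff_sum, coeff_monomial, hm]

end MvPolynomial

def vertexDegree (m : α ⊕ α →₀ ℕ) (v : α) : ℕ := m (inl v) + m (inr v)

namespace SimpleGraph

/-! ### Binomial edge ideals and moves along walks -/

variable (R) in
def binomialEdgeIdeal (G : SimpleGraph α) : Ideal (MvPolynomial (α ⊕ α) R) :=
  Ideal.span {f | ∃ a b, G.Adj a b ∧ f = edgeBinomial R a b}

lemma edgeBinomial_mem_binomialEdgeIdeal {G : SimpleGraph α} {a b : α} (h : G.Adj a b) :
    edgeBinomial R a b ∈ G.binomialEdgeIdeal R :=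
  Ideal.subset_span ⟨a, b, h, rfl⟩

lemma binomialEdgeIdeal_mono {G H : SimpleGraph α} (h : G ≤ H) :
    G.binomialEdgeIdeal R ≤ H.binomialEdgeIdeal R :=
  Ideal.span_mono fun _ ⟨a, b, hab, hf⟩ => ⟨a, b, h hab, hf⟩

lemma span_edgeBinomial_image_eq_binomialEdgeIdeal (P : Set (α × α)) :
    Ideal.span ((fun e => edgeBinomial R e.1 e.2) '' P) =
      (fromEdgeSet ((fun e => s(e.1, e.2)) '' P)).binomialEdgeIdeal R := by
  apply le_antisymm
  · rw [Ideal.span_le]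
    rintro _ ⟨⟨a, b⟩, he, rfl⟩
    obtain rfl | hab := eq_or_ne a b
    · simp [edgeBinomial_self]
    · exact edgeBinomial_mem_binomialEdgeIdeal ((fromEdgeSet_adj _).2 ⟨⟨_, he, rfl⟩, hab⟩)
  · rw [binomialEdgeIdeal, Ideal.span_le]
    rintro _ ⟨a, b, hab, rfl⟩
    obtain ⟨⟨⟨c, d⟩, he, hcd⟩, -⟩ := (fromEdgeSet_adj _).1 hab
    rcases Sym2.eq_iff.1 hcd with ⟨rfl, rfl⟩ | ⟨rfl, rfl⟩
    · exact Ideal.subset_span ⟨_, he, rfl⟩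
    · rw [edgeBinomial_swap]
      exact neg_mem (Ideal.subset_span ⟨_, he, rfl⟩)

def isolate (G : SimpleGraph α) (W : Set α) : SimpleGraph α where
  Adj a b := G.Adj a b ∧ a ∉ W ∧ b ∉ W
  symm := ⟨fun _ _ h => ⟨h.1.symm, h.2.2, h.2.1⟩⟩
  loopless := ⟨fun _ h => h.1.ne rfl⟩

lemma isolate_le (G : SimpleGraph α) (W : Set α) : G.isolate W ≤ G := fun _ _ h => h.1

open scoped Classical in
def componentXDegree [Fintype α] (G : SimpleGraph α) (m : α ⊕ α →₀ ℕ) (C : G.ConnectedComponent) :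
    ℕ :=
  ∑ u with G.connectedComponentMk u = C, m (inl u)

variable {G : SimpleGraph α}

lemma Walk.IsPath.neighborSet_nontrivial {v w u : α} {p : G.Walk v w} (hp : p.IsPath)
    (hu : u ∈ p.support) (hv : u ≠ v) (hw : u ≠ w) : (G.neighborSet u).Nontrivial := by
  obtain ⟨n, rfl, hn⟩ := Walk.mem_support_iff_exists_getVert.1 hu
  have h0 : n ≠ 0 := by rintro rfl; exact hv p.getVert_zero
  have hlt : n < p.length := hn.lt_of_ne (by rintro rfl; exact hw p.getVert_length)
  obtain ⟨x, y, hxy, hxy'⟩ :=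
    Set.ncard_eq_two.1 (hp.ncard_neighborSet_toSubgraph_internal_eq_two h0 hlt)
  exact (hxy' ▸ Set.nontrivial_pair hxy).mono (p.toSubgraph.neighborSet_subset _)

/-- Passing a variable of each interior vertex along the walk (`X_mul_edgeBinomial`) reduces to the
edge binomials. -/
theorem monomial_mul_edgeBinomial_mem {v w : α} (p : G.Walk v w) (m : α ⊕ α →₀ ℕ)
    (hm : ∀ u ∈ p.support, u ≠ v → u ≠ w → vertexDegree m u ≠ 0) :
    monomial m (1 : R) * edgeBinomial R v w ∈ G.binomialEdgeIdeal R := by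
  classical
  induction p generalizing m with
  | nil => simp [edgeBinomial_self]
  | @cons v z w h q ih =>
    obtain rfl | hzw := eq_or_ne z w
    · exact Ideal.mul_mem_left _ _ (edgeBinomial_mem_binomialEdgeIdeal h)
    obtain ⟨ι, hι, hz⟩ : ∃ ι : α → α ⊕ α, (ι = inl ∨ ι = inr) ∧ m (ι z) ≠ 0 := by
      have := hm z (by simp) h.ne' hzw
      by_cases hx : m (inl z) = 0
      · exact ⟨inr, Or.inr rfl, by simpa [vertexDegree, hx] using this⟩
      · exact ⟨inl, Or.inl rfl, hx⟩
    obtain ⟨m₁, rfl⟩ := exists_add_of_le (Finsupp.single_le_iff.2 (Nat.one_le_iff_ne_zero.2 hz))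
    have key : monomial (single (ι z) 1 + m₁) (1 : R) * edgeBinomial R v w =
        monomial (single (ι v) 1 + m₁) 1 * edgeBinomial R z w +
          monomial (single (ι w) 1 + m₁) 1 * edgeBinomial R v z := by
      simp only [monomial_single_add, pow_one]
      linear_combination monomial m₁ (1 : R) * X_mul_edgeBinomial (R := R) hι z v w
    rw [key]
    refine add_mem (ih _ fun u hu huz huw => ?_) (Ideal.mul_mem_left _ _
      (edgeBinomial_mem_binomialEdgeIdeal h))
    have := hm u (List.mem_cons_of_mem _ hu)
    rcases hι with rfl | rfl <;> by_cases huv : u = v <;>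
      simp_all [vertexDegree, Finsupp.single_apply]

lemma monomial_sub_monomial_swap_mem {v w : α} (hvw : G.Reachable v w) (m : α ⊕ α →₀ ℕ)
    (hm : ∀ u, (G.neighborSet u).Nontrivial → u ≠ v → u ≠ w → vertexDegree m u ≠ 0) :
    monomial (single (inl v) 1 + (single (inr w) 1 + m)) (1 : R) -
      monomial (single (inl w) 1 + (single (inr v) 1 + m)) 1 ∈ G.binomialEdgeIdeal R := by
  classical
  obtain ⟨p⟩ := hvw
  have hmove : monomial (single (inl v) 1 + (single (inr w) 1 + m)) (1 : R) -
      monomial (single (inl w) 1 + (single (inr v) 1 + m)) 1 =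
        monomial m 1 * edgeBinomial R v w := by
    simp only [monomial_single_add, pow_one, edgeBinomial]
    ring
  rw [hmove]
  exact monomial_mul_edgeBinomial_mem p.toPath m fun u hu huv huw =>
    hm u (p.toPath.2.neighborSet_nontrivial hu huv huw) huv huw

section Fintype

variable [Fintype α]

lemma exists_lt_of_componentXDegree_eq {m m' : α ⊕ α →₀ ℕ} {v : α}
    (h : G.componentXDegree m (G.connectedComponentMk v) =
      G.componentXDegree m' (G.connectedComponentMk v))
    (hv : m' (inl v) < m (inl v)) :
    ∃ w, G.connectedComponentMk w = G.connectedComponentMk v ∧ m (inl w) < m' (inl w) := by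
  classical
  by_contra! hle
  refine h.not_gt (Finset.sum_lt_sum (fun u hu => hle u (Finset.mem_filter.1 hu).2) ⟨v, ?_, hv⟩)
  simp

lemma eq_of_forall_le_of_componentXDegree_eq {m m' : α ⊕ α →₀ ℕ}
    (hdeg : ∀ v, vertexDegree m v = vertexDegree m' v)
    (hcomp : ∀ C, G.componentXDegree m C = G.componentXDegree m' C)
    (hle : ∀ v, m (inl v) ≤ m' (inl v)) : m = m' := by
  have hx : ∀ v, m (inl v) = m' (inl v) := fun v => (hle v).antisymm <| by
    by_contra! hlt
    obtain ⟨w, -, hw⟩ := exists_lt_of_componentXDegree_eq (hcomp _).symm hlt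
    exact (hle w).not_gt hw
  ext (v | v)
  · exact hx v
  · have := hdeg v
    simp only [vertexDegree, hx v] at this
    omega

lemma exists_sub_mem_binomialEdgeIdeal_of_lt {m m' : α ⊕ α →₀ ℕ} {v : α}
    (hdeg : ∀ v, vertexDegree m v = vertexDegree m' v)
    (hcomp : ∀ C, G.componentXDegree m C = G.componentXDegree m' C)
    (hpos : ∀ v, (G.neighborSet v).Nontrivial → vertexDegree m v ≠ 0)
    (hv : m' (inl v) < m (inl v)) :
    ∃ m'', monomial m (1 : R) - monomial m'' 1 ∈ G.binomialEdgeIdeal R ∧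
      (∀ u, vertexDegree m'' u = vertexDegree m u) ∧
      (∀ C, G.componentXDegree m'' C = G.componentXDegree m C) ∧
      ∑ u, (m'' (inl u) - m' (inl u)) < ∑ u, (m (inl u) - m' (inl u)) := by
  classical
  obtain ⟨w, hwv, hw⟩ := exists_lt_of_componentXDegree_eq (hcomp _) hv
  have hvw : v ≠ w := by rintro rfl; omega
  obtain ⟨m₁, rfl⟩ : ∃ m₁, m = single (inl v) 1 + (single (inr w) 1 + m₁) := by
    have hw' := hdeg w
    simp only [vertexDegree] at hw'
    have hle : single (inl v) 1 + single (inr w) 1 ≤ m := by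
      rintro (z | z) <;> simp only [Finsupp.add_apply, Finsupp.single_apply] <;> split_ifs <;>
        simp_all <;> omega
    obtain ⟨m₁, hm⟩ := exists_add_of_le hle
    exact ⟨m₁, by rw [hm, add_assoc]⟩
  refine ⟨single (inl w) 1 + (single (inr v) 1 + m₁),
    monomial_sub_monomial_swap_mem (ConnectedComponent.exact hwv.symm) m₁ fun u hu huv huw => ?_,
    fun u => ?_, fun C => ?_, ?_⟩
  · simpa [vertexDegree, Finsupp.single_apply, huv, huw] using hpos u hu
  · simp only [vertexDegree, Finsupp.add_apply, Finsupp.single_apply, inl.injEq, inr.injEq,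
      reduceCtorEq, if_false]
    split_ifs <;> omega
  · simp [componentXDegree, Finset.sum_add_distrib, Finsupp.single_apply, hwv]
  · have hv' : m' (inl v) < 1 + m₁ (inl v) := by simpa using hv
    have hw' : m₁ (inl w) < m' (inl w) := by simpa [hvw] using hw
    refine Finset.sum_lt_sum (fun u _ => ?_) ⟨v, Finset.mem_univ _, ?_⟩ <;>
      simp only [Finsupp.add_apply, Finsupp.single_apply, inl.injEq, reduceCtorEq, if_false,
        zero_add] <;> split_ifs <;> subst_vars <;> omega

theorem monomial_sub_monomial_mem_binomialEdgeIdeal {m m' : α ⊕ α →₀ ℕ}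
    (hdeg : ∀ v, vertexDegree m v = vertexDegree m' v)
    (hcomp : ∀ C, G.componentXDegree m C = G.componentXDegree m' C)
    (hpos : ∀ v, (G.neighborSet v).Nontrivial → vertexDegree m v ≠ 0) :
    monomial m (1 : R) - monomial m' 1 ∈ G.binomialEdgeIdeal R := by
  classical
  induction hN : ∑ v, (m (inl v) - m' (inl v)) using Nat.strong_induction_on generalizing m with
  | _ N ih =>
  by_cases hexcess : ∃ v, m' (inl v) < m (inl v)
  · obtain ⟨v, hv⟩ := hexcess
    obtain ⟨m'', hmove, hdeg'', hcomp'', hlt⟩ :=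
      exists_sub_mem_binomialEdgeIdeal_of_lt (R := R) hdeg hcomp hpos hv
    rw [← sub_add_sub_cancel _ (monomial m'' 1)]
    exact add_mem hmove (ih _ (hN ▸ hlt) (fun u => (hdeg'' u).trans (hdeg u))
      (fun C => (hcomp'' C).trans (hcomp C)) (fun u hu => hdeg'' u ▸ hpos u hu) rfl)
  · push Not at hexcess
    simp [eq_of_forall_le_of_componentXDegree_eq hdeg hcomp hexcess]

end Fintype

/-! ### The monomial maps `φ_W` -/

section ComponentMap

variable (G) (W : Finset α)

abbrev ComponentVars : Type _ :=
  ((G.isolate W).ConnectedComponent ⊕ (G.isolate W).ConnectedComponent) ⊕ α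

def componentWeight : α ⊕ α → G.ComponentVars W →₀ ℕ
  | inl v => single (inl (inl ((G.isolate W).connectedComponentMk v))) 1 + single (inr v) 1
  | inr v => single (inl (inr ((G.isolate W).connectedComponentMk v))) 1 + single (inr v) 1

def componentExponent (m : α ⊕ α →₀ ℕ) : G.ComponentVars W →₀ ℕ :=
  m.sum fun z k => k • G.componentWeight W z

variable (R) [DecidableEq α] in
/-- The map `φ_W`. The variables `inl (inl C)`, `inl (inr C)`, `inr v` of `ComponentVars` stand for
`s_C`, `t_C`, `u_v`, with `C` a component of `G.isolate W`. -/
def componentMap : MvPolynomial (α ⊕ α) R →ₐ[R] MvPolynomial (G.ComponentVars W) R :=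
  aeval fun z => if Sum.elim id id z ∈ W then 0 else monomial (G.componentWeight W z) 1

variable {G W}

section Exponent

variable [Fintype α]

lemma componentExponent_apply (m : α ⊕ α →₀ ℕ) (i : G.ComponentVars W) :
    G.componentExponent W m i = ∑ z, m z * G.componentWeight W z i := by
  rw [componentExponent, Finsupp.sum_fintype _ _ (by simp), Finsupp.finsetSum_apply]
  simp

lemma componentExponent_apply_inr (m : α ⊕ α →₀ ℕ) (v : α) :
    G.componentExponent W m (inr v) = vertexDegree m v := by
  classical
  simp [componentExponent_apply, componentWeight, Finsupp.single_apply, vertexDegree]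

lemma componentExponent_apply_inl_inl (m : α ⊕ α →₀ ℕ) (C : (G.isolate W).ConnectedComponent) :
    G.componentExponent W m (inl (inl C)) = (G.isolate W).componentXDegree m C := by
  classical
  simp [componentExponent_apply, componentWeight, componentXDegree, Finsupp.single_apply,
    Finset.sum_filter]

end Exponent

variable [DecidableEq α]

lemma componentMap_monomial {m : α ⊕ α →₀ ℕ} (hm : ∀ v ∈ W, vertexDegree m v = 0) (a : R) :
    G.componentMap R W (monomial m a) = monomial (G.componentExponent W m) a := by
  have hvar : ∀ z ∈ m.support, Sum.elim id id z ∉ W := by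
    rintro (v | v) hz hv <;> simp_all [vertexDegree]
  rw [componentMap, aeval_monomial, algebraMap_eq, componentExponent, Finsupp.sum, Finsupp.prod,
    Finset.prod_congr rfl fun z hz => by rw [if_neg (hvar z hz), monomial_pow, one_pow],
    ← monomial_sum_one, C_mul_monomial, mul_one]

lemma componentMap_monomial_eq_zero {m : α ⊕ α →₀ ℕ} (hm : ∃ v ∈ W, vertexDegree m v ≠ 0)
    (a : R) : G.componentMap R W (monomial m a) = 0 := by
  obtain ⟨v, hvW, hv⟩ := hm
  obtain ⟨z, hz, hzv⟩ : ∃ z, m z ≠ 0 ∧ Sum.elim id id z = v := by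
    by_cases h : m (inl v) = 0
    · exact ⟨inr v, by simpa [vertexDegree, h] using hv, rfl⟩
    · exact ⟨inl v, h, rfl⟩
  rw [componentMap, aeval_monomial, Finsupp.prod,
    Finset.prod_eq_zero (Finsupp.mem_support_iff.2 hz), mul_zero]
  simp [hzv, hvW, zero_pow hz]

lemma componentMap_edgeBinomial_of_adj {a b : α} (h : G.Adj a b) :
    G.componentMap R W (edgeBinomial R a b) = 0 := by
  by_cases ha : a ∈ W
  · simp [componentMap, edgeBinomial, ha]
  by_cases hb : b ∈ W
  · simp [componentMap, edgeBinomial, hb]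
  have hab : (G.isolate W).connectedComponentMk a = (G.isolate W).connectedComponentMk b :=
    ConnectedComponent.sound (Adj.reachable ⟨h, ha, hb⟩)
  simp only [componentMap, edgeBinomial, map_sub, map_mul, aeval_X, Sum.elim_inl, Sum.elim_inr,
    id, ha, hb, if_false, monomial_mul, mul_one, sub_eq_zero]
  congr 2
  simp only [componentWeight, hab]
  abel

lemma binomialEdgeIdeal_le_ker_componentMap :
    G.binomialEdgeIdeal R ≤ RingHom.ker (G.componentMap R W) := by
  rw [binomialEdgeIdeal, Ideal.span_le]
  rintro _ ⟨a, b, h, rfl⟩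
  exact componentMap_edgeBinomial_of_adj h

lemma componentMap_edgeBinomial_of_mem {a b : α} (h : ∃ v ∈ s(a, b), v ∈ W) :
    G.componentMap R W (edgeBinomial R a b) = 0 := by
  obtain ⟨v, hv, hvW⟩ := h
  rcases Sym2.mem_iff.1 hv with rfl | rfl <;> simp [componentMap, edgeBinomial, hvW]

lemma componentMap_edgeBinomial_ne_zero [Nontrivial R] {a b : α} (ha : a ∉ W) (hb : b ∉ W)
    (hab : (G.isolate W).connectedComponentMk a ≠ (G.isolate W).connectedComponentMk b) :
    G.componentMap R W (edgeBinomial R a b) ≠ 0 := by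
  classical
  simp only [componentMap, edgeBinomial, map_sub, map_mul, aeval_X, Sum.elim_inl, Sum.elim_inr,
    id, ha, hb, if_false, monomial_mul, mul_one, ne_eq, sub_eq_zero]
  intro h
  have := DFunLike.congr_fun (monomial_left_injective one_ne_zero h)
    (inl (inl ((G.isolate W).connectedComponentMk a)))
  simp [componentWeight, hab.symm] at this

lemma exists_mem_of_componentMap_edgeBinomial_eq_zero [Nontrivial R] {a b c : α} (hab : a ≠ b)
    (hc : c ∈ s(a, b)) (hiso : ∀ z, ¬G.Adj c z)
    (h : G.componentMap R W (edgeBinomial R a b) = 0) : ∃ v ∈ s(a, b), v ∈ W := by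
  by_contra! hW
  refine componentMap_edgeBinomial_ne_zero (hW a (Sym2.mem_mk_left a b))
    (hW b (Sym2.mem_mk_right a b)) (fun hab' => ?_) h
  have hwalk : ∀ {x y} (_ : (G.isolate W).Walk x y), x = c → x ≠ y → False := by
    rintro x y (_ | ⟨hxz, _⟩) hx hxy
    · exact hxy rfl
    · exact hiso _ (hx ▸ hxz.1)
  obtain ⟨p⟩ := ConnectedComponent.exact hab'
  rcases Sym2.mem_iff.1 hc with rfl | rfl
  · exact hwalk p rfl hab
  · exact hwalk p.reverse rfl hab.symm

variable [Fintype α]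

lemma coeff_componentMap (h : MvPolynomial (α ⊕ α) R) {m₀ : α ⊕ α →₀ ℕ}
    (hm₀ : ∀ v ∈ W, vertexDegree m₀ v = 0) :
    coeff (G.componentExponent W m₀) (G.componentMap R W h) =
      ∑ m ∈ h.support with G.componentExponent W m = G.componentExponent W m₀, coeff m h := by
  classical
  conv_lhs => rw [h.as_sum]
  rw [map_sum, coeff_sum, Finset.sum_filter]
  refine Finset.sum_congr rfl fun m _ => ?_
  by_cases hm : ∀ v ∈ W, vertexDegree m v = 0
  · rw [componentMap_monomial hm, coeff_monomial]
    split_ifs <;> rfl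
  · push Not at hm
    obtain ⟨v, hv, hne⟩ := hm
    rw [componentMap_monomial_eq_zero ⟨v, hv, hne⟩, coeff_zero, if_neg]
    intro heq
    rw [← componentExponent_apply_inr (G := G) (W := W), heq, componentExponent_apply_inr,
      hm₀ v hv] at hne
    exact hne rfl

end ComponentMap

variable [Fintype α]

lemma monomial_sub_monomial_mem_of_componentExponent_eq {W : Finset α} {m m₀ : α ⊕ α →₀ ℕ}
    (hW : ∀ v, (G.neighborSet v).Nontrivial → vertexDegree m₀ v = 0 → v ∈ W)
    (h : G.componentExponent W m = G.componentExponent W m₀) :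
    monomial m (1 : R) - monomial m₀ 1 ∈ G.binomialEdgeIdeal R := by
  have hdeg : ∀ v, vertexDegree m v = vertexDegree m₀ v := fun v => by
    simpa only [componentExponent_apply_inr] using DFunLike.congr_fun h (inr v)
  refine binomialEdgeIdeal_mono (G.isolate_le W) <|
    monomial_sub_monomial_mem_binomialEdgeIdeal hdeg (fun C => ?_) fun v hv => ?_
  · simpa only [componentExponent_apply_inl_inl] using DFunLike.congr_fun h (inl (inl C))
  · obtain ⟨a, ha, b, hb, hab⟩ := hv
    have hvW : v ∉ W := (ha : (G.isolate W).Adj v a).2.1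
    have hG : (G.neighborSet v).Nontrivial := ⟨a, ha.1, b, hb.1, hab⟩
    exact hdeg v ▸ fun h0 => hvW (hW v hG h0)

variable [DecidableEq α]

theorem mem_binomialEdgeIdeal_of_forall_componentMap_eq_zero {h : MvPolynomial (α ⊕ α) R}
    (H : ∀ W : Finset α, (∀ v ∈ W, (G.neighborSet v).Nontrivial) → G.componentMap R W h = 0) :
    h ∈ G.binomialEdgeIdeal R := by
  classical
  induction hs : h.support using Finset.strongInduction generalizing h with
  | H s ih =>
  obtain h0 | ⟨m₀, hm₀⟩ := h.support.eq_empty_or_nonempty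
  · rw [support_eq_empty.1 h0]
    exact zero_mem _
  -- With this `W₀`, every internal vertex outside `W₀` occurs in each monomial of the fibre of
  -- `m₀`, which makes the fibre connected by moves.
  set W₀ : Finset α := {v | (G.neighborSet v).Nontrivial ∧ vertexDegree m₀ v = 0}
  set M := {m ∈ h.support | G.componentExponent W₀ m = G.componentExponent W₀ m₀}
  have hg : ∑ m ∈ M, monomial m (coeff m h) ∈ G.binomialEdgeIdeal R := by
    refine sum_monomial_mem_of_sum_eq_zero ?_ fun m hm =>
      monomial_sub_monomial_mem_of_componentExponent_eq (fun v hv h0 => by simp [W₀, hv, h0])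
        (Finset.mem_filter.1 hm).2
    have hsum := coeff_componentMap (G := G) (W := W₀) h (m₀ := m₀) (by simp +contextual [W₀])
    rw [H W₀ (by simp +contextual [W₀]), coeff_zero] at hsum
    convert hsum.symm
  have hM : M.Nonempty := ⟨m₀, Finset.mem_filter.2 ⟨hm₀, rfl⟩⟩
  have hrest : h - ∑ m ∈ M, monomial m (coeff m h) ∈ G.binomialEdgeIdeal R := by
    refine ih _ (hs ▸ Finset.sdiff_ssubset (Finset.filter_subset _ _) hM) (fun W hW => ?_)
      (support_sub_sum_monomial_coeff h M)
    rw [map_sub, H W hW, binomialEdgeIdeal_le_ker_componentMap hg, sub_zero]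
  simpa using add_mem hrest hg

theorem colon_span_mul_eq_colon_span [IsDomain R] {f g : MvPolynomial (α ⊕ α) R}
    (hfg : ∀ W : Finset α, (∀ v ∈ W, (G.neighborSet v).Nontrivial) →
      G.componentMap R W g = 0 → G.componentMap R W f = 0) :
    (G.binomialEdgeIdeal R).colon (Ideal.span {f * g}) =
      (G.binomialEdgeIdeal R).colon (Ideal.span {f}) := by
  ext r
  rw [Ideal.mem_colon_span_singleton, Ideal.mem_colon_span_singleton]
  refine ⟨fun h => mem_binomialEdgeIdeal_of_forall_componentMap_eq_zero fun W hW => ?_,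
    fun h => mul_assoc r f g ▸ Ideal.mul_mem_right _ _ h⟩
  have h0 := binomialEdgeIdeal_le_ker_componentMap (W := W) h
  rw [RingHom.mem_ker, ← mul_assoc, map_mul, mul_eq_zero] at h0
  by_cases hg : G.componentMap R W g = 0
  · rw [map_mul, hfg W hW hg, mul_zero]
  · exact h0.resolve_right hg

end SimpleGraph

/-! ### Breadth-first orderings of the edges of a tree -/

lemma Finset.exists_strictMono_comp {V β : Type*} [LinearOrder β] {s : Finset V} {n : ℕ}
    (hs : s.card = n) {f : V → β} (hf : f.Injective) :
    ∃ c : Fin n → V, (∀ k, c k ∈ s) ∧ (∀ v ∈ s, ∃ k, c k = v) ∧ StrictMono (f ∘ c) := by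
  have hcard : (s.image f).card = n := by rw [Finset.card_image_of_injective _ hf, hs]
  let e := (s.image f).orderEmbOfFin hcard
  have he : ∀ k, ∃ v ∈ s, f v = e k := fun k =>
    Finset.mem_image.1 ((s.image f).orderEmbOfFin_mem hcard k)
  choose c hc hfc using he
  refine ⟨c, hc, fun v hv => ?_, fun j k hjk => by simpa [hfc] using e.strictMono hjk⟩
  obtain ⟨k, hk⟩ : f v ∈ Set.range e := by
    rw [Finset.range_orderEmbOfFin]
    exact Finset.mem_image_of_mem f hv
  exact ⟨k, hf ((hfc k).trans hk)⟩

lemma Sym2.mk_min_max {V : Type*} [LinearOrder V] (a b : V) : s(min a b, max a b) = s(a, b) := by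
  rcases le_total a b with h | h <;> simp [h, Sym2.eq_swap]

namespace SimpleGraph

variable {V : Type*} {G : SimpleGraph V} {n : ℕ}

/-- `E k` is the `k`-th edge, oriented as `(parent, child)`. -/
structure IsBFSEdgeOrdering (G : SimpleGraph V) (E : Fin n → V × V) : Prop where
  adj (k : Fin n) : G.Adj (E k).1 (E k).2
  child_fresh {j k : Fin n} : j < k → (E k).2 ≠ (E j).1 ∧ (E k).2 ≠ (E j).2
  parent_eq_of_le_of_le {j l k : Fin n} : j ≤ l → l ≤ k → (E j).1 = (E k).1 → (E l).1 = (E j).1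
  exists_eq_of_adj {a b : V} : G.Adj a b → ∃ k, s(a, b) = s((E k).1, (E k).2)

def prefixGraph (E : Fin n → V × V) (i : ℕ) : SimpleGraph V :=
  fromEdgeSet ((fun j : Fin n => s((E j).1, (E j).2)) '' {j | j.val < i})

namespace IsBFSEdgeOrdering

variable {E : Fin n → V × V} (hE : G.IsBFSEdgeOrdering E)
include hE

lemma child_notMem {j k : Fin n} (hjk : j < k) : (E k).2 ∉ s((E j).1, (E j).2) := by
  rw [Sym2.mem_iff, not_or]
  exact hE.child_fresh hjk

lemma child_injective : Function.Injective fun k => (E k).2 := by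
  intro j k h
  by_contra hne
  rcases lt_or_gt_of_ne hne with hjk | hkj
  · exact (hE.child_fresh hjk).2 h.symm
  · exact (hE.child_fresh hkj).2 h

lemma sym2_injective : Function.Injective fun k => s((E k).1, (E k).2) := by
  intro j k (h : s((E j).1, (E j).2) = s((E k).1, (E k).2))
  by_contra hne
  rcases lt_or_gt_of_ne hne with hjk | hkj
  · exact hE.child_notMem hjk (h ▸ Sym2.mem_mk_right _ _)
  · exact hE.child_notMem hkj (h.symm ▸ Sym2.mem_mk_right _ _)

lemma not_adj_child {i : ℕ} {k : Fin n} (hik : i ≤ k) (z : V) :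
    ¬(prefixGraph E i).Adj (E k).2 z := by
  rintro ⟨⟨j, hj, hjk : s((E j).1, (E j).2) = s((E k).2, z)⟩, -⟩
  exact hE.child_notMem (Fin.lt_def.2 (lt_of_lt_of_le hj hik)) (hjk ▸ Sym2.mem_mk_left _ _)

lemma parent_eq_of_neighborSet_nontrivial {i : ℕ} {i₁ i₂ : Fin n} (hi : i ≤ i₁) (h₁₂ : i₁ ≤ i₂)
    (h : ((prefixGraph E i).neighborSet (E i₂).1).Nontrivial) : (E i₁).1 = (E i₂).1 := by
  obtain ⟨x, ⟨⟨j₁, hj₁, hx : s((E j₁).1, (E j₁).2) = s((E i₂).1, x)⟩, -⟩,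
    y, ⟨⟨j₂, hj₂, hy : s((E j₂).1, (E j₂).2) = s((E i₂).1, y)⟩, -⟩, hxy⟩ := h
  obtain ⟨l, hl, hlp⟩ : ∃ l : Fin n, l.val < i ∧ (E l).1 = (E i₂).1 := by
    rcases Sym2.eq_iff.1 hx with ⟨h₁, -⟩ | ⟨hx₁, hp₁⟩
    · exact ⟨j₁, hj₁, h₁⟩
    rcases Sym2.eq_iff.1 hy with ⟨h₂, -⟩ | ⟨hy₂, hp₂⟩
    · exact ⟨j₂, hj₂, h₂⟩
    obtain rfl : j₁ = j₂ := hE.child_injective (hp₁.trans hp₂.symm)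
    exact absurd (hx₁.symm.trans hy₂) hxy
  rw [← hlp, hE.parent_eq_of_le_of_le (Fin.le_def.2 (by omega)) h₁₂ hlp]

lemma fst_ne_snd_of_sym2_eq {p : V × V} {k : Fin n} (h : s(p.1, p.2) = s((E k).1, (E k).2)) :
    p.1 ≠ p.2 := fun hp => (hE.adj k).ne (Sym2.mk_isDiag_iff.1 (h ▸ Sym2.mk_isDiag_iff.2 hp))

lemma exists_sorted [LinearOrder V] :
    ∃ e : Fin n → V × V, ∀ k, (e k).1 < (e k).2 ∧ s((e k).1, (e k).2) = s((E k).1, (E k).2) :=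
  ⟨fun k => (min (E k).1 (E k).2, max (E k).1 (E k).2),
    fun k => ⟨min_lt_max.2 (hE.adj k).ne, Sym2.mk_min_max _ _⟩⟩

theorem range_edgeBinomial [LinearOrder V] {e : Fin n → V × V}
    (he : ∀ k, (e k).1 < (e k).2 ∧ s((e k).1, (e k).2) = s((E k).1, (E k).2)) :
    Set.range (fun k => edgeBinomial R (e k).1 (e k).2) =
      {f | ∃ a b : V, a < b ∧ G.Adj a b ∧ f = X (inl a) * X (inr b) - X (inl b) * X (inr a)} := by
  ext f
  constructor
  · rintro ⟨k, rfl⟩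
    exact ⟨_, _, (he k).1, by rw [← mem_edgeSet, (he k).2]; exact hE.adj k, rfl⟩
  · rintro ⟨a, b, hab, hadj, rfl⟩
    obtain ⟨k, hk⟩ := hE.exists_eq_of_adj hadj
    rw [← (he k).2] at hk
    rcases Sym2.eq_iff.1 hk with ⟨rfl, rfl⟩ | ⟨rfl, rfl⟩
    · exact ⟨k, rfl⟩
    · exact absurd (he k).1 hab.not_gt

theorem edgeBinomial_notMem_span [Nontrivial R] {e : Fin n → V × V}
    (he : ∀ k, s((e k).1, (e k).2) = s((E k).1, (E k).2)) (k : Fin n) :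
    edgeBinomial R (e k).1 (e k).2 ∉
      Ideal.span ((fun j => edgeBinomial R (e j).1 (e j).2) '' {j | j ≠ k}) :=
  edgeBinomial_notMem_span_image (fun j => hE.fst_ne_snd_of_sym2_eq (he j))
    (fun j k h => hE.sym2_injective (by simpa only [he] using h)) k

theorem colon_span_edgeBinomial_mul [IsDomain R] [Fintype V] [DecidableEq V]
    {e : Fin n → V × V} (he : ∀ k, s((e k).1, (e k).2) = s((E k).1, (E k).2)) {i : ℕ}
    {i₁ i₂ : Fin n} (hi : i ≤ i₁) (h₁₂ : i₁ ≤ i₂) :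
    (Ideal.span ((fun k => edgeBinomial R (e k).1 (e k).2) '' {j | j.val < i})).colon
        (Ideal.span {edgeBinomial R (e i₁).1 (e i₁).2 * edgeBinomial R (e i₂).1 (e i₂).2}) =
      (Ideal.span ((fun k => edgeBinomial R (e k).1 (e k).2) '' {j | j.val < i})).colon
        (Ideal.span {edgeBinomial R (e i₁).1 (e i₁).2}) := by
  have hJ : Ideal.span ((fun k => edgeBinomial R (e k).1 (e k).2) '' {j | j.val < i}) =
      (prefixGraph E i).binomialEdgeIdeal R := by
    rw [← Set.image_image (fun p : V × V => edgeBinomial R p.1 p.2),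
      span_edgeBinomial_image_eq_binomialEdgeIdeal, Set.image_image]
    simp only [he]
    rfl
  have hi₂ : i ≤ i₂ := hi.trans (Fin.le_def.1 h₁₂)
  rw [hJ]
  refine colon_span_mul_eq_colon_span fun W hW h₂ => ?_
  have hne : (e i₂).1 ≠ (e i₂).2 := hE.fst_ne_snd_of_sym2_eq (he i₂)
  obtain ⟨v, hv, hvW⟩ := exists_mem_of_componentMap_edgeBinomial_eq_zero hne
    ((he i₂).symm ▸ Sym2.mem_mk_right _ _) (hE.not_adj_child hi₂) h₂
  have hp : (E i₂).1 ∈ W := by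
    rw [he] at hv
    rcases Sym2.mem_iff.1 hv with rfl | rfl
    · exact hvW
    · obtain ⟨z, hz, -⟩ := hW _ hvW
      exact absurd hz (hE.not_adj_child hi₂ z)
  refine componentMap_edgeBinomial_of_mem ⟨(E i₁).1, (he i₁).symm ▸ Sym2.mem_mk_left _ _, ?_⟩
  rwa [hE.parent_eq_of_neighborSet_nontrivial hi h₁₂ (hW _ hp)]

end IsBFSEdgeOrdering

namespace IsTree

variable (hG : G.IsTree) (r : V)

def rootPath (v : V) : G.Walk v r := (hG.existsUnique_path v r).choose

lemma rootPath_isPath (v : V) : (hG.rootPath r v).IsPath :=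
  (hG.existsUnique_path v r).choose_spec.1

lemma eq_rootPath {v : V} {p : G.Walk v r} (hp : p.IsPath) : p = hG.rootPath r v :=
  (hG.existsUnique_path v r).choose_spec.2 p hp

def parent (v : V) : V := (hG.rootPath r v).getVert 1

def depth (v : V) : ℕ := (hG.rootPath r v).length

variable {hG r}

lemma parent_eq_of_rootPath_eq_cons {v u : V} {h : G.Adj v u} {q : G.Walk u r}
    (hq : hG.rootPath r v = .cons h q) :
    hG.parent r v = u ∧ hG.depth r v = hG.depth r u + 1 := by
  have hqu : q = hG.rootPath r u := hG.eq_rootPath r (hq ▸ hG.rootPath_isPath r v).of_cons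
  simp [parent, depth, hq, hqu]

lemma adj_parent {v : V} (hv : v ≠ r) : G.Adj v (hG.parent r v) := by
  obtain ⟨u, h, q, hq⟩ := Walk.exists_eq_cons_of_ne hv (hG.rootPath r v)
  rwa [(parent_eq_of_rootPath_eq_cons hq).1]

lemma depth_eq_depth_parent_add_one {v : V} (hv : v ≠ r) :
    hG.depth r v = hG.depth r (hG.parent r v) + 1 := by
  obtain ⟨u, h, q, hq⟩ := Walk.exists_eq_cons_of_ne hv (hG.rootPath r v)
  obtain ⟨rfl, hd⟩ := parent_eq_of_rootPath_eq_cons hq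
  exact hd

lemma parent_eq_of_adj {a b : V} (hab : G.Adj a b) :
    (a ≠ r ∧ hG.parent r a = b) ∨ (b ≠ r ∧ hG.parent r b = a) := by
  classical
  by_cases hb : b ∈ (hG.rootPath r a).support
  · left
    have hpath : ((hG.rootPath r a).takeUntil b hb).IsPath := (hG.rootPath_isPath r a).takeUntil hb
    have hedge : (Walk.cons hab Walk.nil).IsPath := by simp [hab.ne]
    have htake : (hG.rootPath r a).takeUntil b hb = Walk.cons hab Walk.nil :=
      (hG.existsUnique_path a b).unique hpath hedge
    have hsplit := (hG.rootPath r a).take_spec hb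
    rw [htake, Walk.cons_append, Walk.nil_append] at hsplit
    refine ⟨?_, (parent_eq_of_rootPath_eq_cons hsplit.symm).1⟩
    intro har
    have hp := hG.rootPath_isPath r a
    rw [← hsplit] at hp
    exact ((Walk.cons_isPath_iff _ _).1 hp).2 (by convert Walk.end_mem_support _)
  · right
    have hpath : (Walk.cons hab.symm (hG.rootPath r a)).IsPath :=
      (Walk.cons_isPath_iff _ _).2 ⟨hG.rootPath_isPath r a, hb⟩
    refine ⟨?_, (parent_eq_of_rootPath_eq_cons (hG.eq_rootPath r hpath).symm).1⟩
    intro hbr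
    exact hb (hbr ▸ Walk.end_mem_support _)

theorem exists_isBFSEdgeOrdering [Fintype V] [LinearOrder V] (hG : G.IsTree)
    (hn : Fintype.card V = n + 1) : ∃ E : Fin n → V × V, G.IsBFSEdgeOrdering E := by
  obtain ⟨r⟩ : Nonempty V := Fintype.card_pos_iff.1 (by omega)
  let level : V → ℕ ×ₗ V := fun v => toLex (hG.depth r v, hG.parent r v)
  let key : V → (ℕ ×ₗ V) ×ₗ V := fun v => toLex (level v, v)
  have hcard : (Finset.univ.erase r).card = n := by
    rw [Finset.card_erase_of_mem (Finset.mem_univ r), Finset.card_univ, hn, Nat.add_sub_cancel]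
  obtain ⟨c, hc, hsurj, hmono⟩ := Finset.exists_strictMono_comp hcard
    (fun v w h => congrArg (fun x => (ofLex x).2) h : key.Injective)
  have hcr : ∀ k, c k ≠ r := fun k => (Finset.mem_erase.1 (hc k)).1
  have hlevel : ∀ {j k}, j ≤ k → level (c j) ≤ level (c k) := fun hjk =>
    Prod.Lex.monotone_fst _ _ (hmono.monotone hjk)
  have hdepth : ∀ k, hG.depth r (c k) = hG.depth r (hG.parent r (c k)) + 1 :=
    fun k => depth_eq_depth_parent_add_one (hcr k)
  refine ⟨fun k => (hG.parent r (c k), c k), ⟨fun k => (adj_parent (hcr k)).symm,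
    fun {j k} hjk => ⟨fun h => ?_, fun h => hjk.ne (hmono.injective (congrArg key h.symm))⟩,
    fun {j l k} hjl hlk h => ?_, fun {a b} hab => ?_⟩⟩
  · have hd : hG.depth r (c j) ≤ hG.depth r (c k) :=
      Prod.Lex.monotone_fst (level (c j)) (level (c k)) (hlevel hjk.le)
    have := hdepth j
    rw [← show c k = hG.parent r (c j) from h] at this
    omega
  · have hjk : level (c j) = level (c k) := by
      simp only at h
      simp [level, h, hdepth j, hdepth k]
    exact congrArg (fun x => (ofLex x).2) (le_antisymm (hlevel hjl) (hjk ▸ hlevel hlk)).symm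
  · rcases parent_eq_of_adj (hG := hG) (r := r) hab with ⟨ha, hpa⟩ | ⟨hb, hpb⟩
    · obtain ⟨k, rfl⟩ := hsurj a (Finset.mem_erase.2 ⟨ha, Finset.mem_univ a⟩)
      exact ⟨k, by simp [hpa, Sym2.eq_swap]⟩
    · obtain ⟨k, rfl⟩ := hsurj b (Finset.mem_erase.2 ⟨hb, Finset.mem_univ b⟩)
      exact ⟨k, by simp [hpb]⟩

end IsTree

end SimpleGraph

end

/-- Let `G` be a tree on the vertex set `[n+1]` (so with `n` edges).
Then the edge binomials `f_{ij} = x_i y_j - x_j y_i` of `G` can be ordered as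
`d_1, …, d_n` so that they form a `p`-sequence in
`S = K[x_1,…,x_{n+1},y_1,…,y_{n+1}]`: they minimally generate the binomial edge ideal
`J_G` and `(d_0,…,d_i) : (d_{i1} d_{i2}) = (d_0,…,d_i) : d_{i1}` for all
`0 ≤ i ≤ n-1` and `i < i1 ≤ i2 ≤ n` (0-based below). -/
theorem binomialEdgeIdeal_tree_pSequence {K : Type*} [Field K] {n : ℕ}
    (G : SimpleGraph (Fin (n + 1))) (hG : G.IsTree) :
    ∃ d : Fin n → MvPolynomial (Fin (n + 1) ⊕ Fin (n + 1)) K,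
      (Set.range d = {p | ∃ i j : Fin (n + 1), i < j ∧ G.Adj i j ∧
        p = X (Sum.inl i) * X (Sum.inr j) - X (Sum.inl j) * X (Sum.inr i)}) ∧
      (Ideal.span (Set.range d) =
        Ideal.span {p | ∃ i j : Fin (n + 1), i < j ∧ G.Adj i j ∧
          p = X (Sum.inl i) * X (Sum.inr j) - X (Sum.inl j) * X (Sum.inr i)}) ∧
      (∀ k : Fin n, d k ∉ Ideal.span (d '' {j | j ≠ k})) ∧
      (∀ i : ℕ, i < n → ∀ i1 i2 : Fin n, i ≤ i1.val → i1 ≤ i2 →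
        (Ideal.span (d '' {j | j.val < i})).colon (Ideal.span {d i1 * d i2}) =
        (Ideal.span (d '' {j | j.val < i})).colon (Ideal.span {d i1})) := by
  obtain ⟨E, hE⟩ := hG.exists_isBFSEdgeOrdering (Fintype.card_fin _)
  obtain ⟨e, he⟩ := hE.exists_sorted
  have hrange := hE.range_edgeBinomial (R := K) he
  exact ⟨_, hrange, by rw [hrange], hE.edgeBinomial_notMem_span fun k => (he k).2,
    fun i _ i₁ i₂ hi h₁₂ => hE.colon_span_edgeBinomial_mul (fun k => (he k).2) hi h₁₂⟩
end

section
/- Let A be a commutative Noetherian ring and z_1,…,z_n ∈ A an unconditional d-sequence (i.e., a d-sequence in every order). Then z_1,…,z_n is a p-sequence: (z_1,…,z_i) : (z_{i1} z_{i2}) = (z_1,…,z_i) : z_{i1} for all 0 ≤ i ≤ n−1 and i < i1 ≤ i2 ≤ n. -/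
namespace Fin

variable {n : ℕ} {i a b : Fin n}

theorem image_swap_setOf_lt (hb : i ≤ b) :
    Equiv.swap i b '' {k | k < i} = {k | k < i} := by
  refine (Set.image_congr fun k hk => ?_).trans (Set.image_id _)
  exact Equiv.swap_apply_of_ne_of_ne (ne_of_lt hk) (ne_of_lt (lt_of_lt_of_le hk hb))

theorem le_swap_apply (ha : i ≤ a) (hb : i ≤ b) : i ≤ Equiv.swap i b a := by
  rw [Equiv.swap_apply_def]
  split_ifs
  exacts [hb, le_rfl, ha]

end Fin

theorem IsDSeq.colon_mul_eq_of_swap {A : Type*} [CommRing A] {n : ℕ} {z : Fin n → A}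
    {i a b : Fin n} (ha : i ≤ a) (hb : i ≤ b) (hd : IsDSeq (z ∘ Equiv.swap i b)) :
    (Ideal.span (z '' {k | k < i})).colon (Ideal.span {z a * z b}) =
      (Ideal.span (z '' {k | k < i})).colon (Ideal.span {z a}) := by
  have key := hd.2 i (Equiv.swap i b a) (Fin.le_swap_apply ha hb)
  rwa [Set.image_comp, Fin.image_swap_setOf_lt hb, Function.comp_apply, Function.comp_apply,
    Equiv.swap_apply_left, Equiv.swap_apply_self, mul_comm] at key

theorem unconditional_dSequence_is_pSequence_general {A : Type*} [CommRing A]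
    {n : ℕ} (z : Fin n → A)
    (hd : ∀ σ : Equiv.Perm (Fin n), IsDSeq (z ∘ σ)) :
    (∀ k : Fin n, z k ∉ Ideal.span (z '' {j | j ≠ k})) ∧
    (∀ i : ℕ, i < n → ∀ i1 i2 : Fin n, i ≤ i1.val → i1 ≤ i2 →
      (Ideal.span (z '' {j | j.val < i})).colon (Ideal.span {z i1 * z i2}) =
      (Ideal.span (z '' {j | j.val < i})).colon (Ideal.span {z i1})) :=
  ⟨(hd 1).1, fun i hi _ _ h1 h2 =>
    IsDSeq.colon_mul_eq_of_swap (i := ⟨i, hi⟩) h1 (Fin.le_iff_val_le_val.2 h1 |>.trans h2) (hd _)⟩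

/-- In a commutative Noetherian ring, an unconditional `d`-sequence
(a `d`-sequence in every order) is a `p`-sequence. -/
theorem unconditional_dSequence_is_pSequence {A : Type*} [CommRing A]
    [IsNoetherianRing A] {n : ℕ} (z : Fin n → A)
    (hd : ∀ σ : Equiv.Perm (Fin n), IsDSeq (z ∘ σ)) :
    (∀ k : Fin n, z k ∉ Ideal.span (z '' {j | j ≠ k})) ∧
    (∀ i : ℕ, i < n → ∀ i1 i2 : Fin n, i ≤ i1.val → i1 ≤ i2 →
      (Ideal.span (z '' {j | j.val < i})).colon (Ideal.span {z i1 * z i2}) =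
      (Ideal.span (z '' {j | j.val < i})).colon (Ideal.span {z i1})) :=
  unconditional_dSequence_is_pSequence_general z hd
end

section
/- Let A be an integral domain and suppose z_1,…,z_n ∈ A is a p-sequence such that each partial ideal (z_1,…,z_i) is prime (or zero) for all 1 ≤ i ≤ n. Then the ideal I = (z_1,…,z_n) is of linear type: every polynomial relation on z_1,…,z_n is generated by linear relations. -/
/-!
Under the hypotheses, `z` is a regular sequence: `z i` is a nonzerodivisor on the domain
`A ⧸ (z 0, …, z (i-1))`, since that ideal is prime and does not contain `z i`. Regular sequences
are of linear type, by induction on their length. Reducing a relation `F` modulo `z 0` and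
`X 0 ↦ 0` gives a relation of the regular sequence `z 1, …, z (n-1)` over `A ⧸ (z 0)`, hence a
combination of linear relations there; lifting them puts `F` in (linear relations) + `(X 0, z 0)`.
The Koszul relations `z 0 X k - z k X 0` absorb the `z 0`-part, so `F ≡ X 0 * W`, and then
`z 0 * W(z) = 0` makes `W` a relation of smaller degree.
-/

open MvPolynomial

section Homogeneous

variable {σ A : Type*} [CommRing A]

attribute [local instance] MvPolynomial.gradedAlgebra

lemma homogeneousComponent_X_mul (i : σ) (d : ℕ) (p : MvPolynomial σ A) :
    homogeneousComponent (d + 1) (X i * p) = X i * homogeneousComponent d p := by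
  have hdec (φ : MvPolynomial σ A) (k : ℕ) :
      (DirectSum.decompose (homogeneousSubmodule σ A) φ k : MvPolynomial σ A) =
        homogeneousComponent k φ :=
    decomposition.decompose'_apply φ k
  have h := DirectSum.coe_decompose_mul_of_left_mem_of_le (homogeneousSubmodule σ A)
    (b := p) (n := d + 1) ((mem_homogeneousSubmodule 1 _).mpr (isHomogeneous_X A i)) (by omega)
  rwa [hdec, hdec, Nat.add_sub_cancel] at h

lemma MvPolynomial.IsHomogeneous.mem_span_range_X {p : MvPolynomial σ A} {d : ℕ}
    (hp : p.IsHomogeneous d) (hd : 0 < d) : p ∈ Ideal.span (Set.range X) := by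
  rw [← Set.image_univ, mem_ideal_span_X_image]
  intro m hm
  by_contra! h
  have hm0 : m = 0 := Finsupp.ext fun i => h i (Set.mem_univ i)
  have hdeg := hp (mem_support_iff.mp hm)
  simp only [hm0, map_zero] at hdeg
  omega

end Homogeneous

section LinearRelations

variable {σ A : Type*} [Fintype σ] [CommRing A]

def linearRelations (z : σ → A) : Set (MvPolynomial σ A) :=
  {L | ∃ a : σ → A, L = ∑ i, C (a i) * X i ∧ ∑ i, a i * z i = 0}

def IsLinearType (z : σ → A) : Prop :=
  ∀ (F : MvPolynomial σ A) (d : ℕ), 0 < d → F.IsHomogeneous d → eval z F = 0 →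
    F ∈ Ideal.span (linearRelations z)

variable {z : σ → A}

lemma span_linearRelations_le_ker_eval :
    Ideal.span (linearRelations z) ≤ RingHom.ker (eval z) := by
  rw [Ideal.span_le]
  rintro _ ⟨a, rfl, ha⟩
  simpa using ha

lemma isHomogeneous_of_mem_linearRelations {L : MvPolynomial σ A}
    (hL : L ∈ linearRelations z) : L.IsHomogeneous 1 := by
  obtain ⟨a, rfl, -⟩ := hL
  exact IsHomogeneous.sum _ _ _ fun i _ => isHomogeneous_C_mul_X _ _

attribute [local instance] MvPolynomial.gradedAlgebra

lemma isHomogeneous_span_linearRelations :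
    (Ideal.span (linearRelations z)).IsHomogeneous (homogeneousSubmodule σ A) :=
  Ideal.homogeneous_span _ _ fun _ hL => ⟨1, isHomogeneous_of_mem_linearRelations hL⟩

lemma C_mul_X_sub_C_mul_X_mem_linearRelations (z : σ → A) (i j : σ) :
    C (z i) * X j - C (z j) * X i ∈ linearRelations z := by
  classical
  refine ⟨Pi.single j (z i) - Pi.single i (z j), ?_, ?_⟩
  · simp only [Pi.sub_apply, map_sub, sub_mul, Finset.sum_sub_distrib, Pi.single_apply,
      apply_ite C, map_zero, ite_mul, zero_mul, Finset.sum_ite_eq', Finset.mem_univ, if_true]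
  · simp only [Pi.sub_apply, sub_mul, Finset.sum_sub_distrib, Pi.single_apply, ite_mul,
      zero_mul, Finset.sum_ite_eq', Finset.mem_univ, if_true]
    ring

lemma C_mul_mem_span_linearRelations_sup_span_X (i : σ) {p : MvPolynomial σ A}
    (hp : p ∈ Ideal.span (Set.range X)) :
    C (z i) * p ∈ Ideal.span (linearRelations z) ⊔ Ideal.span {X i} := by
  induction hp using Submodule.span_induction with
  | mem _ hp =>
    obtain ⟨k, rfl⟩ := hp
    rw [← sub_add_cancel (C (z i) * X k) (C (z k) * X i)]
    exact Submodule.add_mem_sup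
      (Ideal.subset_span (C_mul_X_sub_C_mul_X_mem_linearRelations z i k))
      (Ideal.mul_mem_left _ _ (Ideal.mem_span_singleton_self _))
  | zero => simp
  | add p q _ _ hp hq => simpa [mul_add] using add_mem hp hq
  | smul a p _ hp => simpa [mul_left_comm] using Ideal.mul_mem_left _ a hp

lemma mem_sup_span_X_of_mem_sup_span_pair {F : MvPolynomial σ A} {d : ℕ} (i : σ) (hd : 0 < d)
    (hF : F.IsHomogeneous d)
    (hmem : F ∈ Ideal.span (linearRelations z) ⊔ Ideal.span {X i, C (z i)}) :
    F ∈ Ideal.span (linearRelations z) ⊔ Ideal.span {X i} := by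
  set K := Ideal.span (linearRelations z) ⊔ Ideal.span {X i}
  have hK : K.IsHomogeneous (homogeneousSubmodule σ A) :=
    isHomogeneous_span_linearRelations.sup
      (Ideal.homogeneous_span _ _ fun _ hx => ⟨1, hx ▸ isHomogeneous_X A i⟩)
  rw [Ideal.span_insert, ← sup_assoc, Submodule.mem_sup] at hmem
  obtain ⟨a, ha, b, hb, rfl⟩ := hmem
  obtain ⟨v, rfl⟩ := Ideal.mem_span_singleton'.mp hb
  rw [← homogeneousComponent_eq_self hF, map_add, mul_comm, homogeneousComponent_C_mul]
  exact add_mem (homogeneousComponent_mem_of_mem hK ha d)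
    (C_mul_mem_span_linearRelations_sup_span_X i
      ((homogeneousComponent_isHomogeneous d v).mem_span_range_X hd))

lemma exists_eq_add_X_mul {F : MvPolynomial σ A} {d : ℕ} (i : σ) (hF : F.IsHomogeneous (d + 1))
    (hmem : F ∈ Ideal.span (linearRelations z) ⊔ Ideal.span {X i}) :
    ∃ j ∈ Ideal.span (linearRelations z), ∃ W : MvPolynomial σ A,
      W.IsHomogeneous d ∧ F = j + X i * W := by
  obtain ⟨j, hj, y, hy, rfl⟩ := Submodule.mem_sup.mp hmem
  obtain ⟨w, rfl⟩ := Ideal.mem_span_singleton'.mp hy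
  refine ⟨_, homogeneousComponent_mem_of_mem isHomogeneous_span_linearRelations hj (d + 1),
    _, homogeneousComponent_isHomogeneous d w, ?_⟩
  rw [← homogeneousComponent_eq_self hF, map_add, mul_comm, homogeneousComponent_X_mul]

end LinearRelations

section Reduction

variable {A : Type*} [CommRing A] {n : ℕ}

noncomputable def reduction (r : A) :
    MvPolynomial (Fin (n + 1)) A →+* MvPolynomial (Fin n) (A ⧸ Ideal.span {r}) :=
  eval₂Hom (C.comp (Ideal.Quotient.mk _)) (Fin.cases 0 X)

@[simp] lemma reduction_C (r a : A) :
    reduction (n := n) r (C a) = C (Ideal.Quotient.mk _ a) :=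
  eval₂Hom_C _ _ _

@[simp] lemma reduction_X_zero (r : A) : reduction (n := n) r (X 0) = 0 :=
  eval₂Hom_X' _ _ _

@[simp] lemma reduction_X_succ (r : A) (i : Fin n) : reduction r (X i.succ) = X i :=
  eval₂Hom_X' _ _ _

lemma eval_reduction (z : Fin (n + 1) → A) (F : MvPolynomial (Fin (n + 1)) A) :
    eval (Ideal.Quotient.mk _ ∘ Fin.tail z) (reduction (z 0) F) =
      Ideal.Quotient.mk _ (eval z F) := by
  suffices h : (eval (Ideal.Quotient.mk _ ∘ Fin.tail z)).comp (reduction (z 0)) =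
      (Ideal.Quotient.mk _).comp (eval z) from congrArg (· F) h
  refine ringHom_ext (fun a => by simp) fun i => ?_
  induction i using Fin.cases with
  | zero => simp
  | succ i => simp [Fin.tail]

lemma isHomogeneous_reduction (r : A) {F : MvPolynomial (Fin (n + 1)) A} {d : ℕ}
    (hF : F.IsHomogeneous d) : (reduction r F).IsHomogeneous d := by
  have h := hF.eval₂ (C.comp (Ideal.Quotient.mk (Ideal.span {r}))) (Fin.cases 0 X)
    (fun a => isHomogeneous_C _ _) (fun i => i.cases (isHomogeneous_zero _ _ 1) (isHomogeneous_X _))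
  rwa [one_mul] at h

lemma reduction_surjective (r : A) : Function.Surjective (reduction (n := n) r) := by
  intro p
  induction p using MvPolynomial.induction_on with
  | C a =>
    obtain ⟨a, rfl⟩ := Ideal.Quotient.mk_surjective a
    exact ⟨C a, reduction_C r a⟩
  | add p q hp hq =>
    obtain ⟨p, rfl⟩ := hp
    obtain ⟨q, rfl⟩ := hq
    exact ⟨p + q, map_add _ p q⟩
  | mul_X p i hp =>
    obtain ⟨p, rfl⟩ := hp
    exact ⟨p * X i.succ, by rw [map_mul, reduction_X_succ]⟩

/-- Through `finSuccEquiv`, a kernel element is a polynomial in `X 0` whose constant term lies in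
`(C r)`; the rest is divisible by `X 0`. -/
lemma ker_reduction_le (r : A) :
    RingHom.ker (reduction (n := n) r) ≤ Ideal.span {X 0, C r} := by
  set e := finSuccEquiv A n
  have hfac : reduction (n := n) r =
      (map (Ideal.Quotient.mk _)).comp (Polynomial.constantCoeff.comp e.toRingHom) := by
    refine ringHom_ext (fun a => by simp [e, finSuccEquiv_apply]) fun i => ?_
    induction i using Fin.cases with
    | zero => simp [e, finSuccEquiv_X_zero]
    | succ i => simp [e, finSuccEquiv_X_succ]
  intro H hH
  have hker : (e H).coeff 0 ∈ RingHom.ker (map (Ideal.Quotient.mk (Ideal.span {r}))) := by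
    simpa [hfac] using hH
  rw [ker_map, Ideal.mk_ker, Ideal.map_span, Set.image_singleton] at hker
  obtain ⟨v, hv⟩ := Ideal.mem_span_singleton'.mp hker
  obtain ⟨q, hq⟩ := Polynomial.X_dvd_sub_C (p := e H)
  refine Ideal.mem_span_pair.mpr ⟨e.symm q, e.symm (Polynomial.C v), e.injective ?_⟩
  have hC : e (C r) = Polynomial.C (C r) := by simp [e, finSuccEquiv_apply]
  rw [map_add, map_mul, map_mul, e.apply_symm_apply, e.apply_symm_apply, finSuccEquiv_X_zero, hC,
    ← Polynomial.C_mul, hv, mul_comm, ← hq, sub_add_cancel]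

end Reduction

section QuotientStep

variable {A : Type*} [CommRing A] {n : ℕ}

lemma exists_reduction_eq_of_mem_linearRelations (z : Fin (n + 1) → A)
    {L : MvPolynomial (Fin n) (A ⧸ Ideal.span {z 0})}
    (hL : L ∈ linearRelations (Ideal.Quotient.mk _ ∘ Fin.tail z)) :
    ∃ L' ∈ linearRelations z, reduction (z 0) L' = L := by
  obtain ⟨b, rfl, hb⟩ := hL
  choose a ha using fun i => Ideal.Quotient.mk_surjective (b i)
  have hsum : ∑ i, a i * z i.succ ∈ Ideal.span {z 0} := by
    rw [← Ideal.Quotient.eq_zero_iff_mem, ← hb]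
    simp [ha, Fin.tail]
  obtain ⟨c, hc⟩ := Ideal.mem_span_singleton'.mp hsum
  refine ⟨_, ⟨Fin.cons (-c) a, rfl, ?_⟩, ?_⟩
  · rw [Fin.sum_univ_succ]
    simp [hc]
  · simp [Fin.sum_univ_succ, ha]

lemma mem_sup_span_pair_of_isLinearType_quotient (z : Fin (n + 1) → A)
    (h : IsLinearType (Ideal.Quotient.mk (Ideal.span {z 0}) ∘ Fin.tail z))
    {F : MvPolynomial (Fin (n + 1)) A} {d : ℕ} (hd : 0 < d) (hF : F.IsHomogeneous d)
    (hev : eval z F = 0) :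
    F ∈ Ideal.span (linearRelations z) ⊔ Ideal.span {X 0, C (z 0)} := by
  have hred :
      reduction (z 0) F ∈ Ideal.span (linearRelations (Ideal.Quotient.mk _ ∘ Fin.tail z)) :=
    h _ d hd (isHomogeneous_reduction _ hF) (by rw [eval_reduction, hev, map_zero])
  have hle : Ideal.span (linearRelations (Ideal.Quotient.mk _ ∘ Fin.tail z)) ≤
      (Ideal.span (linearRelations z)).map (reduction (z 0)) := by
    refine Ideal.span_le.mpr fun L hL => ?_
    obtain ⟨L', hL', rfl⟩ := exists_reduction_eq_of_mem_linearRelations z hL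
    exact Ideal.mem_map_of_mem _ (Ideal.subset_span hL')
  obtain ⟨G, hG, hGF⟩ :=
    (Ideal.mem_map_iff_of_surjective _ (reduction_surjective _)).mp (hle hred)
  have hker : F - G ∈ Ideal.span {X 0, C (z 0)} :=
    ker_reduction_le _ (by rw [RingHom.mem_ker, map_sub, hGF, sub_self])
  simpa using Submodule.add_mem_sup hG hker

theorem IsLinearType.of_quotient (z : Fin (n + 1) → A) (hz : IsSMulRegular A (z 0))
    (h : IsLinearType (Ideal.Quotient.mk (Ideal.span {z 0}) ∘ Fin.tail z)) :
    IsLinearType z := by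
  intro F d
  induction d using Nat.strong_induction_on generalizing F with
  | _ d ih =>
  intro hd hF hev
  obtain ⟨e, rfl⟩ : ∃ e, d = e + 1 := ⟨d - 1, by omega⟩
  obtain ⟨j, hj, W, hW, rfl⟩ := exists_eq_add_X_mul 0 hF
    (mem_sup_span_X_of_mem_sup_span_pair 0 hd hF
      (mem_sup_span_pair_of_isLinearType_quotient z h hd hF hev))
  have hevW : eval z W = 0 := by
    have hj0 : eval z j = 0 := span_linearRelations_le_ker_eval hj
    refine hz.right_eq_zero_of_smul ?_
    simpa [hj0] using hev
  refine add_mem hj (Ideal.mul_mem_left _ _ ?_)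
  rcases Nat.eq_zero_or_pos e with rfl | he
  · obtain ⟨c, rfl⟩ : ∃ c, W = C c :=
      ⟨_, by rw [← homogeneousComponent_eq_self hW, homogeneousComponent_zero]⟩
    rw [eval_C] at hevW
    rw [hevW, C_0]
    exact zero_mem _
  · exact ih e (by omega) W he hW hevW

end QuotientStep

section RegularSequence

variable {A : Type*} [CommRing A] {n : ℕ}

/-- The ideal-theoretic form of `RingTheory.Sequence.IsWeaklyRegular A (List.ofFn z)`. -/
def IsWeaklyRegularSeq (z : Fin n → A) : Prop :=
  ∀ i : Fin n, ∀ a : A,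
    z i * a ∈ Ideal.span (z '' {j | j < i}) → a ∈ Ideal.span (z '' {j | j < i})

lemma isWeaklyRegularSeq_of_isPrime {z : Fin n → A}
    (hprime : ∀ i : Fin n, (Ideal.span (z '' {j | j < i})).IsPrime)
    (hnotMem : ∀ i : Fin n, z i ∉ Ideal.span (z '' {j | j < i})) : IsWeaklyRegularSeq z :=
  fun i _ ha => ((hprime i).mem_or_mem ha).resolve_left (hnotMem i)

lemma IsWeaklyRegularSeq.isSMulRegular_zero {z : Fin (n + 1) → A} (h : IsWeaklyRegularSeq z) :
    IsSMulRegular A (z 0) := by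
  intro a b hab
  have h0 : {j : Fin (n + 1) | j < 0} = ∅ :=
    Set.eq_empty_of_forall_notMem fun j => j.not_lt_zero
  have h' := h 0 (a - b)
  simp only [h0, Set.image_empty, Ideal.span_empty, Ideal.mem_bot, mul_sub] at h'
  exact sub_eq_zero.mp (h' (sub_eq_zero.mpr hab))

lemma span_image_quotient_tail (z : Fin (n + 1) → A) (i : Fin n) :
    Ideal.span ((Ideal.Quotient.mk (Ideal.span {z 0}) ∘ Fin.tail z) '' {j | j < i}) =
      (Ideal.span (z '' {j | j < i.succ})).map (Ideal.Quotient.mk _) := by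
  have hset : {j : Fin (n + 1) | j < i.succ} = insert 0 (Fin.succ '' {j | j < i}) := by
    ext j
    induction j using Fin.cases with
    | zero => simp [Fin.succ_pos]
    | succ j => simp [Fin.succ_ne_zero]
  rw [Ideal.map_span, hset, Set.image_insert_eq, Set.image_insert_eq, Ideal.span_insert,
    Ideal.Quotient.eq_zero_iff_mem.mpr (Ideal.mem_span_singleton_self _),
    Ideal.span_singleton_eq_bot.mpr rfl, bot_sup_eq, Set.image_image, Set.image_image]
  rfl

lemma IsWeaklyRegularSeq.quotient_tail {z : Fin (n + 1) → A} (h : IsWeaklyRegularSeq z) :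
    IsWeaklyRegularSeq (Ideal.Quotient.mk (Ideal.span {z 0}) ∘ Fin.tail z) := by
  intro i a ha
  obtain ⟨a, rfl⟩ := Ideal.Quotient.mk_surjective a
  have hle : Ideal.span {z 0} ≤ Ideal.span (z '' {j | j < i.succ}) :=
    Ideal.span_le.mpr (Set.singleton_subset_iff.mpr (Ideal.subset_span ⟨0, i.succ_pos, rfl⟩))
  rw [span_image_quotient_tail] at ha ⊢
  rw [Function.comp_apply, Fin.tail, ← map_mul] at ha
  rw [Ideal.mem_quotient_iff_mem hle] at ha ⊢
  exact h i.succ a ha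

theorem IsWeaklyRegularSeq.isLinearType {z : Fin n → A} (h : IsWeaklyRegularSeq z) :
    IsLinearType z := by
  induction n generalizing A with
  | zero =>
    intro F d hd hF _
    rw [eq_C_of_isEmpty F, ← homogeneousComponent_zero, homogeneousComponent_of_mem hF]
    simp [hd.ne]
  | succ n ih => exact IsLinearType.of_quotient z h.isSMulRegular_zero (ih h.quotient_tail)

end RegularSequence

theorem pSequence_prime_linearType_general {A : Type*} [CommRing A] [IsDomain A] {n : ℕ}
    (z : Fin n → A)
    (hmin : ∀ k : Fin n, z k ∉ Ideal.span (z '' {j | j ≠ k}))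
    (hprime : ∀ i : ℕ, 1 ≤ i → i ≤ n →
      (Ideal.span (z '' {j | j.val < i})).IsPrime ∨
      Ideal.span (z '' {j | j.val < i}) = ⊥) :
    ∀ (F : MvPolynomial (Fin n) A) (d : ℕ), 0 < d → F.IsHomogeneous d →
      MvPolynomial.eval z F = 0 →
      F ∈ Ideal.span {L : MvPolynomial (Fin n) A |
        ∃ a : Fin n → A, L = ∑ i, C (a i) * X i ∧ ∑ i, a i * z i = 0} := by
  refine IsWeaklyRegularSeq.isLinearType (isWeaklyRegularSeq_of_isPrime (fun i => ?_)
    fun i hi => hmin i (Ideal.span_mono (Set.image_mono fun j hj => ne_of_lt hj) hi))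
  rcases Nat.eq_zero_or_pos i.val with h0 | hpos
  · have hempty : {j : Fin n | j < i} = ∅ :=
      Set.eq_empty_of_forall_notMem fun j (hj : j.val < i.val) => by omega
    simpa [hempty] using Ideal.isPrime_bot
  · exact (hprime i hpos i.isLt.le).elim id fun h => h ▸ Ideal.isPrime_bot

/-- Let `A` be an integral domain and `z 0, …, z (n-1)` a `p`-sequence
such that each partial ideal `(z_1,…,z_i)` is prime (or zero). Then `I = (z_1,…,z_n)` is
of linear type: every (positive-degree homogeneous) polynomial relation on `z_1,…,z_n`
lies in the ideal generated by the linear relations. -/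
theorem pSequence_prime_linearType {A : Type*} [CommRing A] [IsDomain A] {n : ℕ}
    (z : Fin n → A)
    (hmin : ∀ k : Fin n, z k ∉ Ideal.span (z '' {j | j ≠ k}))
    (hcolon : ∀ i : ℕ, i < n → ∀ i1 i2 : Fin n, i ≤ i1.val → i1 ≤ i2 →
      (Ideal.span (z '' {j | j.val < i})).colon (Ideal.span {z i1 * z i2}) =
      (Ideal.span (z '' {j | j.val < i})).colon (Ideal.span {z i1}))
    (hprime : ∀ i : ℕ, 1 ≤ i → i ≤ n →
      (Ideal.span (z '' {j | j.val < i})).IsPrime ∨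
      Ideal.span (z '' {j | j.val < i}) = ⊥) :
    ∀ (F : MvPolynomial (Fin n) A) (d : ℕ), 0 < d → F.IsHomogeneous d →
      MvPolynomial.eval z F = 0 →
      F ∈ Ideal.span {L : MvPolynomial (Fin n) A |
        ∃ a : Fin n → A, L = ∑ i, C (a i) * X i ∧ ∑ i, a i * z i = 0} :=
  pSequence_prime_linearType_general z hmin hprime
end
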